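/- arXiv:2512.15974 — 5 statements merged into one kernel-verified Lean document; each statement's English description precedes it below -/
import Mathlib

section
/- Let f : ℝ^n → ℂ be measurable and (θ,T)-periodic with ‖f‖_{L²_{θ,T}} < ∞ (equivalently, f square-integrable on [0,T]^n). Then K_{θ,min} (Σ_{ξ ∈ ℤ^n} |f̂(ξ)|²)^{1/2} ≤ (T^{-n} ∫_{[0,T]^n} |f(x)|² dx)^{1/2} ≤ K_{θ,max} (Σ_{ξ ∈ ℤ^n} |f̂(ξ)|²)^{1/2}. -/
open MeasureTheory Real Finset
open scoped Classical

noncomputable section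

/-- A function `f : ℝⁿ → ℂ` is `(θ,T)`-periodic if `f (x + T eⱼ) = θⱼ f x` for all `x` and `j`. -/
def ThetaPeriodic {n : ℕ} (θ : Fin n → ℂ) (T : ℝ) (f : (Fin n → ℝ) → ℂ) : Prop :=
  ∀ (x : Fin n → ℝ) (j : Fin n), f (x + T • (Pi.single j 1 : Fin n → ℝ)) = θ j * f x

/-- The Fourier coefficient of a `(θ,T)`-periodic function, relative to the chosen
logarithms `L j` of `θ j`. -/
def thetaFourierCoef {n : ℕ} (T : ℝ) (L : Fin n → ℂ) (f : (Fin n → ℝ) → ℂ)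
    (ξ : Fin n → ℤ) : ℂ :=
  (1 / (2 * Real.pi) ^ n : ℝ) •
    ∫ x in Set.Icc (0 : Fin n → ℝ) (fun _ => 2 * Real.pi),
      f ((T / (2 * Real.pi)) • x) *
        Complex.exp (-Complex.I * ∑ j, (x j : ℂ) * (ξ j : ℂ)) *
        Complex.exp (-(∑ j, (x j : ℂ) * L j) / (2 * Real.pi))

open AddCircle Submodule Set
open scoped ComplexConjugate

abbrev tau : ℝ := 2 * Real.pi
instance : Fact (0 < tau) := ⟨by positivity⟩
abbrev G (n : ℕ) := Fin n → AddCircle tau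
abbrev muG (n : ℕ) : Measure (G n) := Measure.pi fun _ => (haarAddCircle : Measure (AddCircle tau))

variable {n : ℕ}

def tchar (ξ : Fin n → ℤ) : C(G n, ℂ) :=
  ⟨fun y => ∏ j, fourier (ξ j) (y j), by
    exact continuous_finset_prod _ fun j _ => (fourier (ξ j)).continuous.comp (continuous_apply j)⟩

@[simp] lemma tchar_apply (ξ : Fin n → ℤ) (y : G n) : tchar ξ y = ∏ j, fourier (ξ j) (y j) := rfl

lemma tchar_add (ξ η : Fin n → ℤ) (y : G n) : tchar (ξ + η) y = tchar ξ y * tchar η y := by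
  simp only [tchar_apply, Pi.add_apply, fourier_add]
  rw [Finset.prod_mul_distrib]

lemma tchar_zero (y : G n) : tchar (0 : Fin n → ℤ) y = 1 := by
  simp [fourier_zero]

lemma tchar_neg (ξ : Fin n → ℤ) (y : G n) : tchar (-ξ) y = conj (tchar ξ y) := by
  simp only [tchar_apply, Pi.neg_apply, fourier_neg, map_prod]

lemma integral_tchar_eq_zero {ξ : Fin n → ℤ} (hξ : ξ ≠ 0) :
    ∫ y, tchar ξ y ∂(muG n) = 0 := by
  obtain ⟨j, hj⟩ : ∃ j, ξ j ≠ 0 := by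
    by_contra h; push_neg at h; exact hξ (funext h)
  have key : ∀ y : G n,
      tchar ξ (y + (Pi.single j (((tau / 2 / (ξ j) : ℝ)) : AddCircle tau) : G n)) = - tchar ξ y := by
    intro y
    simp only [tchar_apply]
    have h3 : (fun j' => fourier (ξ j')
        ((y + (Pi.single j (((tau / 2 / (ξ j) : ℝ)) : AddCircle tau) : G n)) j'))
        = fun j' => (if j' = j then (-1 : ℂ) else 1) * fourier (ξ j') (y j') := by
      funext j'
      by_cases hjj : j' = j
      · subst hjj
        simp only [Pi.add_apply, Pi.single_eq_same, if_pos rfl]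
        rw [fourier_add_half_inv_index hj (Fact.out) (y j')]
        simp [mul_comm]
      · simp only [Pi.add_apply, Pi.single_eq_of_ne hjj, add_zero, if_neg hjj, one_mul]
    rw [h3, Finset.prod_mul_distrib, Finset.prod_ite_eq' Finset.univ j (fun _ => (-1 : ℂ))]
    simp
  exact integral_eq_zero_of_add_right_eq_neg key

def tcharLp (ξ : Fin n → ℤ) : Lp ℂ 2 (muG n) :=
  ContinuousMap.toLp (E := ℂ) 2 (muG n) ℂ (tchar ξ)

lemma coeFn_tcharLp (ξ : Fin n → ℤ) : tcharLp (n := n) ξ =ᵐ[muG n] tchar ξ :=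
  ContinuousMap.coeFn_toLp _ _

lemma orthonormal_tchar : Orthonormal ℂ (tcharLp (n := n)) := by
  rw [orthonormal_iff_ite]
  intro ξ η
  simp only [tcharLp]
  rw [ContinuousMap.inner_toLp (muG n) (tchar ξ) (tchar η)]
  have : ∀ y : G n, tchar η y * conj (tchar ξ y) = tchar (η - ξ) y := by
    intro y
    rw [sub_eq_add_neg, tchar_add, tchar_neg]
  simp_rw [this]
  split_ifs with h
  · subst h
    simp only [sub_self]
    simp_rw [tchar_zero]
    simp [measure_univ]
  · have : η - ξ ≠ 0 := sub_ne_zero.mpr (Ne.symm h)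
    exact integral_tchar_eq_zero this

def tSubalgebra (n : ℕ) : StarSubalgebra ℂ C(G n, ℂ) where
  toSubalgebra := Algebra.adjoin ℂ (Set.range (tchar (n := n)))
  star_mem' := by
    show Algebra.adjoin ℂ (Set.range (tchar (n := n))) ≤
      star (Algebra.adjoin ℂ (Set.range (tchar (n := n))))
    refine Algebra.adjoin_le ?_
    rintro - ⟨ξ, rfl⟩
    exact Algebra.subset_adjoin ⟨-ξ, ContinuousMap.ext fun y => tchar_neg ξ y⟩

theorem tSubalgebra_coe :
    Subalgebra.toSubmodule (tSubalgebra n).toSubalgebra = span ℂ (Set.range (tchar (n := n))) := by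
  apply Algebra.adjoin_eq_span_of_subset
  refine Subset.trans ?_ Submodule.subset_span
  intro x hx
  refine Submonoid.closure_induction (fun _ => id) ⟨0, ?_⟩ ?_ hx
  · ext1 y; exact tchar_zero y
  · rintro - - - - ⟨ξ, rfl⟩ ⟨η, rfl⟩
    exact ⟨ξ + η, ContinuousMap.ext fun y => tchar_add ξ η y⟩

theorem tSubalgebra_separatesPoints : (tSubalgebra n).SeparatesPoints := by
  intro x y hxy
  obtain ⟨j, hj⟩ : ∃ j, x j ≠ y j := by
    by_contra h; push_neg at h; exact hxy (funext h)
  refine ⟨_, ⟨tchar (Pi.single j 1), Algebra.subset_adjoin ⟨Pi.single j 1, rfl⟩, rfl⟩, ?_⟩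
  dsimp only
  have hval : ∀ z : G n, tchar (Pi.single j (1 : ℤ)) z = toCircle (z j) := by
    intro z
    simp only [tchar_apply]
    rw [← Finset.mul_prod_erase Finset.univ _ (Finset.mem_univ j), Pi.single_eq_same, fourier_one]
    rw [Finset.prod_eq_one, mul_one]
    intro j' hj'
    rw [Pi.single_eq_of_ne (Finset.ne_of_mem_erase hj'), fourier_zero]
  rw [hval, hval]
  intro h
  exact hj (injective_toCircle (Fact.out (p := 0 < tau)).ne' (Subtype.coe_inj.mp h))

theorem tSubalgebra_closure_eq_top : (tSubalgebra n).topologicalClosure = ⊤ :=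
  ContinuousMap.starSubalgebra_topologicalClosure_eq_top_of_separatesPoints (tSubalgebra n)
    tSubalgebra_separatesPoints

theorem span_tchar_closure_eq_top :
    (span ℂ (Set.range (tchar (n := n)))).topologicalClosure = ⊤ := by
  rw [← tSubalgebra_coe]
  exact congr_arg (Subalgebra.toSubmodule <| StarSubalgebra.toSubalgebra ·)
    tSubalgebra_closure_eq_top

theorem span_tcharLp_closure_eq_top :
    (span ℂ (Set.range (tcharLp (n := n)))).topologicalClosure = ⊤ := by
  convert (ContinuousMap.toLp_denseRange ℂ (muG n) ℂ
    (by norm_num : (2 : ENNReal) ≠ ⊤)).topologicalClosure_map_submodule span_tchar_closure_eq_top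
  · rfl
  erw [map_span, Set.range_comp]
  simp only [ContinuousLinearMap.coe_coe]

def tBasis (n : ℕ) : HilbertBasis (Fin n → ℤ) ℂ (Lp ℂ 2 (muG n)) :=
  HilbertBasis.mk orthonormal_tchar (span_tcharLp_closure_eq_top).ge

theorem coe_tBasis : ⇑(tBasis n) = tcharLp (n := n) := HilbertBasis.coe_mk _ _

/-- Fourier coefficient on the torus. -/
def tCoeff (g : G n → ℂ) (ξ : Fin n → ℤ) : ℂ :=
  ∫ y, conj (tchar ξ y) * g y ∂(muG n)

theorem tBasis_repr (g : Lp ℂ 2 (muG n)) (ξ : Fin n → ℤ) :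
    (tBasis n).repr g ξ = tCoeff g ξ := by
  trans ∫ y, conj ((tcharLp ξ : G n → ℂ) y) * g y ∂(muG n)
  · rw [(tBasis n).repr_apply_apply g ξ, MeasureTheory.L2.inner_def, coe_tBasis]
    simp only [RCLike.inner_apply, mul_comm]
  · apply integral_congr_ae
    filter_upwards [coeFn_tcharLp ξ] with y hy
    rw [hy]

/-- Parseval's identity on the torus. -/
theorem tsum_sq_tCoeff (g : Lp ℂ 2 (muG n)) :
    ∑' ξ : Fin n → ℤ, ‖tCoeff (g : G n → ℂ) ξ‖ ^ 2 = ∫ y, ‖g y‖ ^ 2 ∂(muG n) := by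
  simp_rw [← tBasis_repr]
  have H₁ : ‖(tBasis n).repr g‖ ^ 2 = ∑' ξ, ‖(tBasis n).repr g ξ‖ ^ 2 := by
    apply_mod_cast lp.norm_rpow_eq_tsum ?_ ((tBasis n).repr g)
    norm_num
  have H₂ : ‖(tBasis n).repr g‖ ^ 2 = ‖g‖ ^ 2 := by simp
  have H₃ := congr_arg RCLike.re (@L2.inner_def (G n) ℂ ℂ _ _ _ _ _ g g)
  rw [← integral_re] at H₃
  · simp only [← @norm_sq_eq_re_inner ℂ] at H₃
    rw [← H₁, H₂, H₃]
  · exact L2.integrable_inner g g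

section Transfer

lemma my_pi_smul {α : Type*} [MeasurableSpace α] (c : ENNReal) (hc : c ≠ ⊤) (m : Measure α)
    [IsFiniteMeasure m] :
    Measure.pi (fun _ : Fin n => c • m) = c ^ n • Measure.pi (fun _ : Fin n => m) := by
  haveI : IsFiniteMeasure (c • m) :=
    ⟨by rw [Measure.smul_apply, smul_eq_mul, lt_top_iff_ne_top];
        exact ENNReal.mul_ne_top hc (measure_ne_top m _)⟩
  refine Measure.pi_eq (μ := fun _ : Fin n => c • m) fun s hs => ?_
  simp only [Measure.smul_apply, smul_eq_mul, Measure.pi_pi, Finset.prod_mul_distrib,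
    Finset.prod_const, Finset.card_univ, Fintype.card_fin]

lemma my_pi_restrict {α : Type*} [MeasurableSpace α] (m : Measure α) [SigmaFinite m]
    (s : Set α) (hs : MeasurableSet s) :
    Measure.pi (fun _ : Fin n => m.restrict s) =
      (Measure.pi fun _ : Fin n => m).restrict (Set.pi univ fun _ => s) := by
  refine Measure.pi_eq (μ := fun _ : Fin n => m.restrict s) fun t ht => ?_
  rw [Measure.restrict_apply (MeasurableSet.univ_pi ht), ← Set.pi_inter_distrib, Measure.pi_pi]
  exact Finset.prod_congr rfl fun j _ => (Measure.restrict_apply (ht j)).symm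

def Phi (n : ℕ) : (Fin n → ℝ) → G n := fun x j => (x j : AddCircle tau)

lemma measurable_Phi : Measurable (Phi n) :=
  measurable_pi_lambda _ fun j => AddCircle.measurable_mk'.comp (measurable_pi_apply j)

abbrev cubeIoc (n : ℕ) : Set (Fin n → ℝ) := Set.pi univ fun _ => Ioc (0 : ℝ) tau

lemma measurePreserving_Phi :
    MeasurePreserving (Phi n)
      (Measure.pi fun _ : Fin n => (ENNReal.ofReal tau)⁻¹ • volume.restrict (Ioc 0 tau))
      (muG n) := by
  apply measurePreserving_pi
  intro j
  have h0 := AddCircle.measurePreserving_mk (T := tau) 0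
  rw [zero_add] at h0
  refine ⟨h0.measurable, ?_⟩
  rw [Measure.map_smul, h0.map_eq, volume_eq_smul_haarAddCircle, smul_smul,
    ENNReal.inv_mul_cancel (by positivity) ENNReal.ofReal_ne_top, one_smul]

lemma source_measure_eq :
    (Measure.pi fun _ : Fin n => (ENNReal.ofReal tau)⁻¹ • volume.restrict (Ioc 0 tau)) =
      ((ENNReal.ofReal tau)⁻¹) ^ n • (volume : Measure (Fin n → ℝ)).restrict (cubeIoc n) := by
  haveI : IsFiniteMeasure (volume.restrict (Ioc (0:ℝ) tau)) :=
    ⟨by rw [Measure.restrict_apply_univ]; exact measure_Ioc_lt_top⟩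
  have htau : (0:ℝ) < tau := by positivity
  rw [my_pi_smul _ (ENNReal.inv_ne_top.mpr (ENNReal.ofReal_pos.mpr htau).ne') _,
    my_pi_restrict _ _ measurableSet_Ioc, ← volume_pi]

lemma integral_muG {E : Type*} [NormedAddCommGroup E] [NormedSpace ℝ E]
    (h : G n → E) (hm : AEStronglyMeasurable h (muG n)) :
    ∫ y, h y ∂(muG n) = ((tau : ℝ) ^ n)⁻¹ • ∫ x in cubeIoc n, h (Phi n x) := by
  rw [← (measurePreserving_Phi (n := n)).map_eq] at hm ⊢
  rw [integral_map (measurePreserving_Phi (n := n)).measurable.aemeasurable hm,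
    source_measure_eq, integral_smul_measure]
  congr 1
  rw [ENNReal.toReal_pow, ENNReal.toReal_inv, ENNReal.toReal_ofReal (by positivity), ← inv_pow]

lemma integrable_muG {E : Type*} [NormedAddCommGroup E]
    (h : G n → E) (hm : AEStronglyMeasurable h (muG n)) :
    Integrable h (muG n) ↔ IntegrableOn (fun x => h (Phi n x)) (cubeIoc n) := by
  rw [← (measurePreserving_Phi (n := n)).integrable_comp hm, source_measure_eq]
  unfold IntegrableOn
  rw [integrable_smul_measure (pow_ne_zero _ (ENNReal.inv_ne_zero.mpr ENNReal.ofReal_ne_top))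
    (ENNReal.pow_ne_top (ENNReal.inv_ne_top.mpr
      (ENNReal.ofReal_pos.mpr (by positivity : (0:ℝ) < tau)).ne'))]
  rfl

end Transfer

section App
open Finset
variable {n : ℕ} (T : ℝ) (L : Fin n → ℂ) (f : (Fin n → ℝ) → ℂ)

/-- The function on the cube whose periodization lives on the torus. -/
def gfun : (Fin n → ℝ) → ℂ := fun x =>
  f ((T / (2 * Real.pi)) • x) * Complex.exp (-(∑ j, (x j : ℂ) * L j) / (2 * Real.pi))

def rho : AddCircle tau → ℝ := fun z => ((measurableEquivIoc tau 0 z : Set.Ioc (0:ℝ) (0 + tau)) : ℝ)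

lemma measurable_rho : Measurable rho :=
  measurable_subtype_coe.comp (measurableEquivIoc tau 0).measurable

lemma rho_coe {x : ℝ} (hx : x ∈ Set.Ioc 0 tau) : rho (x : AddCircle tau) = x := by
  have hx' : x ∈ Set.Ioc 0 (0 + tau) := by simpa using hx
  have h : (equivIoc tau 0) (x : AddCircle tau) = ⟨x, hx'⟩ := by
    rw [Equiv.apply_eq_iff_eq_symm_apply]; rfl
  show ((equivIoc tau 0 (x : AddCircle tau) : Set.Ioc (0:ℝ) (0 + tau)) : ℝ) = x
  rw [h]

def gtor : G n → ℂ := fun y => gfun T L f (fun j => rho (y j))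

lemma gtor_Phi {x : Fin n → ℝ} (hx : x ∈ cubeIoc n) :
    gtor T L f (Phi n x) = gfun T L f x := by
  unfold gtor Phi
  congr 1
  funext j
  exact rho_coe (hx j (Set.mem_univ j))

lemma continuous_expfactor :
    Continuous (fun x : Fin n → ℝ => Complex.exp (-(∑ j, (x j : ℂ) * L j) / (2 * Real.pi))) := by
  refine Complex.continuous_exp.comp ?_
  exact ((continuous_finset_sum _ fun j _ =>
    (Complex.continuous_ofReal.comp (continuous_apply j)).mul continuous_const).neg).div_const _

lemma measurable_gfun (hf : Measurable f) : Measurable (gfun T L f) :=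
  (hf.comp (measurable_const_smul _)).mul (continuous_expfactor L).measurable

lemma measurable_gtor (hf : Measurable f) : Measurable (gtor T L f) :=
  (measurable_gfun T L f hf).comp
    (measurable_pi_lambda _ fun j => measurable_rho.comp (measurable_pi_apply j))

lemma tchar_Phi (ξ : Fin n → ℤ) (x : Fin n → ℝ) :
    tchar ξ (Phi n x) = Complex.exp (Complex.I * ∑ j, (x j : ℂ) * (ξ j : ℂ)) := by
  simp only [tchar_apply, Phi, fourier_coe_apply]
  rw [← Complex.exp_sum]
  congr 1
  rw [Finset.mul_sum]
  refine Finset.sum_congr rfl fun j _ => ?_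
  have hpi : (Real.pi : ℂ) ≠ 0 := Complex.ofReal_ne_zero.mpr Real.pi_ne_zero
  push_cast
  field_simp

lemma conj_tchar_Phi (ξ : Fin n → ℤ) (x : Fin n → ℝ) :
    (starRingEnd ℂ) (tchar ξ (Phi n x)) =
      Complex.exp (-Complex.I * ∑ j, (x j : ℂ) * (ξ j : ℂ)) := by
  rw [← tchar_neg, tchar_Phi]
  congr 1
  have : ∑ j, (x j : ℂ) * (((-ξ) j : ℤ) : ℂ) = -∑ j, (x j : ℂ) * (ξ j : ℂ) := by
    rw [← Finset.sum_neg_distrib]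
    refine Finset.sum_congr rfl fun j _ => ?_
    simp only [Pi.neg_apply]
    push_cast
    ring
  rw [this]
  ring

lemma cubeIoc_ae_Icc :
    (cubeIoc n : Set (Fin n → ℝ)) =ᵐ[volume]
      Set.Icc (0 : Fin n → ℝ) (fun _ => (2 * Real.pi : ℝ)) := by
  rw [volume_pi]
  exact MeasureTheory.Measure.univ_pi_Ioc_ae_eq_Icc

lemma tCoeff_gtor (hf : Measurable f) (ξ : Fin n → ℤ) :
    tCoeff (gtor T L f) ξ = thetaFourierCoef T L f ξ := by
  unfold tCoeff
  have hsm : AEStronglyMeasurable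
      (fun y => (starRingEnd ℂ) (tchar ξ y) * gtor T L f y) (muG n) := by
    refine Measurable.aestronglyMeasurable ?_
    exact ((continuous_star.comp (tchar ξ).continuous).measurable).mul
      (measurable_gtor T L f hf)
  rw [integral_muG _ hsm]
  have h1 : ∫ x in cubeIoc n, (starRingEnd ℂ) (tchar ξ (Phi n x)) * gtor T L f (Phi n x)
      = ∫ x in cubeIoc n,
        f ((T / (2 * Real.pi)) • x) *
          Complex.exp (-Complex.I * ∑ j, (x j : ℂ) * (ξ j : ℂ)) *
          Complex.exp (-(∑ j, (x j : ℂ) * L j) / (2 * Real.pi)) := by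
    refine setIntegral_congr_fun (MeasurableSet.univ_pi fun _ => measurableSet_Ioc) ?_
    intro x hx
    dsimp only
    rw [conj_tchar_Phi, gtor_Phi T L f hx]
    unfold gfun
    ring
  rw [h1, setIntegral_congr_set cubeIoc_ae_Icc]
  unfold thetaFourierCoef
  congr 1
  simp only [tau, one_div]

lemma norm_gfun_sq (x : Fin n → ℝ) :
    ‖gfun T L f x‖ ^ 2 = ‖f ((T / (2 * Real.pi)) • x)‖ ^ 2 *
      (Real.exp (-(∑ j, x j * (L j).re) / (2 * Real.pi))) ^ 2 := by
  unfold gfun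
  rw [norm_mul, mul_pow]
  congr 2
  rw [Complex.norm_exp]
  congr 1
  have h2 : ((2 : ℂ) * (Real.pi : ℂ)) = (((2 * Real.pi : ℝ)) : ℂ) := by push_cast; ring
  rw [h2, Complex.div_ofReal_re]
  congr 1
  rw [Complex.neg_re, Complex.re_sum]
  congr 1
  refine Finset.sum_congr rfl fun j _ => ?_
  rw [Complex.re_ofReal_mul]

variable (θ : Fin n → ℂ)

lemma norm_gtor_integral (hf : Measurable f) :
    ∫ y, ‖gtor T L f y‖ ^ 2 ∂(muG n) =
      ((2 * Real.pi : ℝ) ^ n)⁻¹ *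
        ∫ x in Set.Icc (0 : Fin n → ℝ) (fun _ => (2 * Real.pi : ℝ)), ‖gfun T L f x‖ ^ 2 := by
  have hsm : AEStronglyMeasurable (fun y => ‖gtor T L f y‖ ^ 2) (muG n) :=
    ((measurable_gtor T L f hf).norm.pow_const 2).aestronglyMeasurable
  rw [integral_muG _ hsm, smul_eq_mul]
  congr 1
  rw [← setIntegral_congr_set cubeIoc_ae_Icc]
  refine setIntegral_congr_fun (MeasurableSet.univ_pi fun _ => measurableSet_Ioc) ?_
  intro x hx
  dsimp only
  rw [gtor_Phi T L f hx]

lemma preimage_smul_Icc (hT : 0 < T) :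
    (fun x : Fin n → ℝ => (T / (2 * Real.pi)) • x) ⁻¹' (Set.Icc 0 (fun _ => T)) =
      Set.Icc (0 : Fin n → ℝ) (fun _ => (2 * Real.pi : ℝ)) := by
  have hc : 0 < T / (2 * Real.pi) := div_pos hT (by positivity)
  have hcT : T / (2 * Real.pi) * (2 * Real.pi) = T := div_mul_cancel₀ T (by positivity)
  ext x
  simp only [Set.mem_preimage, Set.mem_Icc, Pi.le_def, Pi.smul_apply, Pi.zero_apply,
    smul_eq_mul]
  constructor
  · rintro ⟨h1, h2⟩
    refine ⟨fun j => ?_, fun j => ?_⟩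
    · exact le_of_mul_le_mul_left (by simpa using h1 j) hc
    · refine le_of_mul_le_mul_left ?_ hc
      calc T / (2 * Real.pi) * x j ≤ T := h2 j
        _ = T / (2 * Real.pi) * (2 * Real.pi) := hcT.symm
  · rintro ⟨h1, h2⟩
    refine ⟨fun j => mul_nonneg hc.le (h1 j), fun j => ?_⟩
    calc T / (2 * Real.pi) * x j ≤ T / (2 * Real.pi) * (2 * Real.pi) :=
          mul_le_mul_of_nonneg_left (h2 j) hc.le
      _ = T := hcT

lemma intF (hT : 0 < T) (hf : Measurable f)
    (hL2 : IntegrableOn (fun x => ‖f x‖ ^ 2) (Set.Icc (0 : Fin n → ℝ) (fun _ => T))) :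
    IntegrableOn (fun x => ‖f ((T / (2 * Real.pi)) • x)‖ ^ 2)
      (Set.Icc (0 : Fin n → ℝ) (fun _ => (2 * Real.pi : ℝ))) := by
  have hc : (T / (2 * Real.pi)) ≠ 0 := by positivity
  have h1 : Integrable ((Set.Icc (0 : Fin n → ℝ) (fun _ => T)).indicator
      (fun x => ‖f x‖ ^ 2)) := (integrable_indicator_iff measurableSet_Icc).2 hL2
  have h2 := h1.comp_smul hc
  rw [← integrable_indicator_iff measurableSet_Icc]
  convert h2 using 1
  · rfl
  funext x
  rw [← Set.indicator_comp_right (fun x : Fin n → ℝ => (T / (2 * Real.pi)) • x),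
    preimage_smul_Icc T hT]
  rfl

lemma scaling (hT : 0 < T) :
    ∫ x in Set.Icc (0 : Fin n → ℝ) (fun _ => (2 * Real.pi : ℝ)),
        ‖f ((T / (2 * Real.pi)) • x)‖ ^ 2 =
      ((T / (2 * Real.pi)) ^ n)⁻¹ *
        ∫ x in Set.Icc (0 : Fin n → ℝ) (fun _ => T), ‖f x‖ ^ 2 := by
  rw [← integral_indicator measurableSet_Icc, ← integral_indicator measurableSet_Icc]
  have key : (fun x : Fin n → ℝ =>
      (Set.Icc (0 : Fin n → ℝ) (fun _ => (2 * Real.pi : ℝ))).indicator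
        (fun x => ‖f ((T / (2 * Real.pi)) • x)‖ ^ 2) x)
      = fun x => (Set.Icc (0 : Fin n → ℝ) (fun _ => T)).indicator
        (fun x => ‖f x‖ ^ 2) ((T / (2 * Real.pi)) • x) := by
    funext x
    rw [← Set.indicator_comp_right (fun x : Fin n → ℝ => (T / (2 * Real.pi)) • x),
      preimage_smul_Icc T hT]
    rfl
  rw [key, MeasureTheory.Measure.integral_comp_smul volume
    ((Set.Icc (0 : Fin n → ℝ) (fun _ => T)).indicator (fun x => ‖f x‖ ^ 2))
    (T / (2 * Real.pi)), smul_eq_mul]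
  congr 1
  rw [Module.finrank_fin_fun, abs_of_nonneg (by positivity)]

lemma weight_bound_upper (x : Fin n → ℝ)
    (hx : x ∈ Set.Icc (0 : Fin n → ℝ) (fun _ => (2 * Real.pi : ℝ))) :
    Real.exp (-(∑ j, x j * (L j).re) / (2 * Real.pi)) ≤
      Real.exp (-(∑ j, min ((L j).re) 0)) := by
  rw [Real.exp_le_exp, div_le_iff₀ (by positivity : (0:ℝ) < 2 * Real.pi), neg_mul, neg_le_neg_iff]
  calc (∑ j, min ((L j).re) 0) * (2 * Real.pi) = ∑ j, min ((L j).re) 0 * (2 * Real.pi) := by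
        rw [Finset.sum_mul]
    _ ≤ ∑ j, x j * (L j).re := by
        refine Finset.sum_le_sum fun j _ => ?_
        rcases le_or_gt 0 ((L j).re) with h | h
        · rw [min_eq_right h, zero_mul]
          exact mul_nonneg (hx.1 j) h
        · rw [min_eq_left h.le, mul_comm (x j)]
          exact mul_le_mul_of_nonpos_left (hx.2 j) h.le

lemma weight_bound_lower (x : Fin n → ℝ)
    (hx : x ∈ Set.Icc (0 : Fin n → ℝ) (fun _ => (2 * Real.pi : ℝ))) :
    Real.exp (-(∑ j, max ((L j).re) 0)) ≤
      Real.exp (-(∑ j, x j * (L j).re) / (2 * Real.pi)) := by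
  rw [Real.exp_le_exp, le_div_iff₀ (by positivity : (0:ℝ) < 2 * Real.pi), neg_mul, neg_le_neg_iff]
  calc (∑ j, x j * (L j).re) ≤ ∑ j, max ((L j).re) 0 * (2 * Real.pi) := by
        refine Finset.sum_le_sum fun j _ => ?_
        rcases le_or_gt 0 ((L j).re) with h | h
        · rw [max_eq_left h, mul_comm (x j)]
          exact mul_le_mul_of_nonneg_left (hx.2 j) h
        · rw [max_eq_right h.le, zero_mul]
          exact (mul_nonpos_of_nonneg_of_nonpos (hx.1 j) h.le)
    _ = (∑ j, max ((L j).re) 0) * (2 * Real.pi) := by rw [Finset.sum_mul]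

lemma exp_sum_min (hθ : ∀ j, θ j ≠ 0) (hL : ∀ j, Complex.exp (L j) = θ j)
    [DecidablePred fun j : Fin n => ‖θ j‖ < 1] :
    Real.exp (-(∑ j, min ((L j).re) 0)) =
      (∏ j ∈ Finset.univ.filter (fun j => ‖θ j‖ < 1), ‖θ j‖)⁻¹ := by
  have hnorm : ∀ j, ‖θ j‖ = Real.exp ((L j).re) := fun j => by
    rw [← hL j, Complex.norm_exp]
  rw [Finset.prod_filter]
  have key : ∀ j : Fin n, (if ‖θ j‖ < 1 then ‖θ j‖ else 1) = Real.exp (min ((L j).re) 0) := by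
    intro j
    rcases lt_or_ge ((L j).re) 0 with h | h
    · rw [if_pos (by rw [hnorm j]; exact Real.exp_lt_one_iff.2 h), min_eq_left h.le, hnorm j]
    · rw [if_neg (by rw [hnorm j]; exact not_lt.2 (Real.one_le_exp_iff.2 h)), min_eq_right h,
        Real.exp_zero]
  simp_rw [key]
  rw [← Real.exp_sum, ← Real.exp_neg]

lemma exp_sum_max (hθ : ∀ j, θ j ≠ 0) (hL : ∀ j, Complex.exp (L j) = θ j)
    [DecidablePred fun j : Fin n => 1 < ‖θ j‖] :
    Real.exp (-(∑ j, max ((L j).re) 0)) =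
      (∏ j ∈ Finset.univ.filter (fun j => 1 < ‖θ j‖), ‖θ j‖)⁻¹ := by
  have hnorm : ∀ j, ‖θ j‖ = Real.exp ((L j).re) := fun j => by
    rw [← hL j, Complex.norm_exp]
  rw [Finset.prod_filter]
  have key : ∀ j : Fin n, (if 1 < ‖θ j‖ then ‖θ j‖ else 1) = Real.exp (max ((L j).re) 0) := by
    intro j
    rcases lt_or_ge 0 ((L j).re) with h | h
    · rw [if_pos (by rw [hnorm j]; exact Real.one_lt_exp_iff.2 h), max_eq_left h.le, hnorm j]
    · rw [if_neg (by rw [hnorm j]; exact not_lt.2 (Real.exp_le_one_iff.2 h)), max_eq_right h,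
        Real.exp_zero]
  simp_rw [key]
  rw [← Real.exp_sum, ← Real.exp_neg]

end App

theorem stmt2 {n : ℕ} (hn : 1 ≤ n) (T : ℝ) (hT : 0 < T) (θ : Fin n → ℂ)
    (hθ : ∀ j, θ j ≠ 0) (L : Fin n → ℂ) (hL : ∀ j, Complex.exp (L j) = θ j)
    (f : (Fin n → ℝ) → ℂ) (hf : Measurable f) (hper : ThetaPeriodic θ T f)
    (hL2 : IntegrableOn (fun x => ‖f x‖ ^ 2) (Set.Icc (0 : Fin n → ℝ) (fun _ => T))) :
    (∏ j ∈ Finset.univ.filter (fun j => ‖θ j‖ < 1), ‖θ j‖) *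
        Real.sqrt (∑' ξ : Fin n → ℤ, ‖thetaFourierCoef T L f ξ‖ ^ 2) ≤
      Real.sqrt ((1 / T ^ n) *
          ∫ x in Set.Icc (0 : Fin n → ℝ) (fun _ => T), ‖f x‖ ^ 2) ∧
    Real.sqrt ((1 / T ^ n) *
          ∫ x in Set.Icc (0 : Fin n → ℝ) (fun _ => T), ‖f x‖ ^ 2) ≤
      (∏ j ∈ Finset.univ.filter (fun j => 1 < ‖θ j‖), ‖θ j‖) *
        Real.sqrt (∑' ξ : Fin n → ℤ, ‖thetaFourierCoef T L f ξ‖ ^ 2) := by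
  have htau : (0:ℝ) < 2 * Real.pi := by positivity
  set Kmin := ∏ j ∈ Finset.univ.filter (fun j => ‖θ j‖ < 1), ‖θ j‖ with hKmin
  set Kmax := ∏ j ∈ Finset.univ.filter (fun j => 1 < ‖θ j‖), ‖θ j‖ with hKmax
  have hKminpos : 0 < Kmin := Finset.prod_pos fun j _ => norm_pos_iff.2 (hθ j)
  have hKmaxpos : 0 < Kmax := Finset.prod_pos fun j _ => norm_pos_iff.2 (hθ j)
  have hintF := intF T f hT hf hL2
  -- the weight and its bounds
  have hwcont : Continuous (fun x : Fin n → ℝ =>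
      Real.exp (-(∑ j, x j * (L j).re) / (2 * Real.pi)) ^ 2) := by
    exact ((Real.continuous_exp.comp (((continuous_finset_sum _ fun j _ =>
      (continuous_apply j).mul continuous_const).neg).div_const _)).pow 2)
  have hwub : ∀ x ∈ Set.Icc (0 : Fin n → ℝ) (fun _ => (2 * Real.pi : ℝ)),
      Real.exp (-(∑ j, x j * (L j).re) / (2 * Real.pi)) ^ 2 ≤ (Kmin⁻¹) ^ 2 := by
    intro x hx
    rw [← exp_sum_min L θ hθ hL]
    exact pow_le_pow_left₀ (Real.exp_pos _).le (weight_bound_upper L x hx) 2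
  have hwlb : ∀ x ∈ Set.Icc (0 : Fin n → ℝ) (fun _ => (2 * Real.pi : ℝ)),
      (Kmax⁻¹) ^ 2 ≤ Real.exp (-(∑ j, x j * (L j).re) / (2 * Real.pi)) ^ 2 := by
    intro x hx
    rw [← exp_sum_max L θ hθ hL]
    exact pow_le_pow_left₀ (Real.exp_pos _).le (weight_bound_lower L x hx) 2
  -- integrability of ‖gfun‖²
  have hgfun_eq : (fun x => ‖gfun T L f x‖ ^ 2) = fun x =>
      (Real.exp (-(∑ j, x j * (L j).re) / (2 * Real.pi)) ^ 2) *
        ‖f ((T / (2 * Real.pi)) • x)‖ ^ 2 := by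
    funext x; rw [norm_gfun_sq]; ring
  have hintW : IntegrableOn (fun x => ‖gfun T L f x‖ ^ 2)
      (Set.Icc (0 : Fin n → ℝ) (fun _ => (2 * Real.pi : ℝ))) := by
    rw [hgfun_eq]
    refine Integrable.bdd_mul (c := (Kmin⁻¹) ^ 2) hintF
      hwcont.aestronglyMeasurable.restrict ?_
    refine (ae_restrict_iff' measurableSet_Icc).2 (ae_of_all _ fun x hx => ?_)
    rw [Real.norm_eq_abs, abs_of_nonneg (by positivity)]
    exact hwub x hx
  -- comparison of the two cube integrals
  have hW_upper : ∫ x in Set.Icc (0 : Fin n → ℝ) (fun _ => (2 * Real.pi : ℝ)),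
      ‖gfun T L f x‖ ^ 2 ≤ (Kmin⁻¹) ^ 2 *
        ∫ x in Set.Icc (0 : Fin n → ℝ) (fun _ => (2 * Real.pi : ℝ)),
          ‖f ((T / (2 * Real.pi)) • x)‖ ^ 2 := by
    rw [← integral_const_mul]
    refine setIntegral_mono_on hintW (hintF.const_mul _) measurableSet_Icc ?_
    intro x hx
    rw [norm_gfun_sq, mul_comm (‖f ((T / (2 * Real.pi)) • x)‖ ^ 2)]
    exact mul_le_mul_of_nonneg_right (hwub x hx) (by positivity)
  have hW_lower : (Kmax⁻¹) ^ 2 *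
        (∫ x in Set.Icc (0 : Fin n → ℝ) (fun _ => (2 * Real.pi : ℝ)),
          ‖f ((T / (2 * Real.pi)) • x)‖ ^ 2) ≤
      ∫ x in Set.Icc (0 : Fin n → ℝ) (fun _ => (2 * Real.pi : ℝ)), ‖gfun T L f x‖ ^ 2 := by
    rw [← integral_const_mul]
    refine setIntegral_mono_on (hintF.const_mul _) hintW measurableSet_Icc ?_
    intro x hx
    rw [norm_gfun_sq, mul_comm (‖f ((T / (2 * Real.pi)) • x)‖ ^ 2)]
    exact mul_le_mul_of_nonneg_right (hwlb x hx) (by positivity)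
  -- Parseval
  have hgm := measurable_gtor T L f hf
  have hcube_sub : cubeIoc n ⊆ Set.Icc (0 : Fin n → ℝ) (fun _ => (2 * Real.pi : ℝ)) := by
    rw [← Set.pi_univ_Icc]
    exact Set.pi_mono fun i _ => Set.Ioc_subset_Icc_self
  have hintG : Integrable (fun y => ‖gtor T L f y‖ ^ 2) (muG n) := by
    rw [integrable_muG _ ((hgm.norm.pow_const 2).aestronglyMeasurable)]
    refine IntegrableOn.congr_fun (hintW.mono_set hcube_sub) ?_
      (MeasurableSet.univ_pi fun _ => measurableSet_Ioc)
    intro x hx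
    dsimp only
    rw [gtor_Phi T L f hx]
  have hmem : MemLp (gtor T L f) 2 (muG n) :=
    (memLp_two_iff_integrable_sq_norm hgm.aestronglyMeasurable).2 hintG
  have hco : ∀ ξ, tCoeff (hmem.toLp (gtor T L f) : G n → ℂ) ξ = thetaFourierCoef T L f ξ := by
    intro ξ
    rw [← tCoeff_gtor T L f hf ξ]
    refine integral_congr_ae ?_
    filter_upwards [hmem.coeFn_toLp] with y hy
    rw [hy]
  have hnrm : ∫ y, ‖(hmem.toLp (gtor T L f) : G n → ℂ) y‖ ^ 2 ∂(muG n)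
      = ∫ y, ‖gtor T L f y‖ ^ 2 ∂(muG n) := by
    refine integral_congr_ae ?_
    filter_upwards [hmem.coeFn_toLp] with y hy
    rw [hy]
  set SS := ∑' ξ : Fin n → ℤ, ‖thetaFourierCoef T L f ξ‖ ^ 2 with hSSdef
  set II := (1 / T ^ n) * ∫ x in Set.Icc (0 : Fin n → ℝ) (fun _ => T), ‖f x‖ ^ 2 with hIIdef
  have hSig : SS = ((2 * Real.pi : ℝ) ^ n)⁻¹ *
        ∫ x in Set.Icc (0 : Fin n → ℝ) (fun _ => (2 * Real.pi : ℝ)), ‖gfun T L f x‖ ^ 2 := by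
    rw [hSSdef]
    simp_rw [← hco]
    rw [tsum_sq_tCoeff, hnrm, norm_gtor_integral T L f hf]
  have hI : II = ((2 * Real.pi : ℝ) ^ n)⁻¹ *
        ∫ x in Set.Icc (0 : Fin n → ℝ) (fun _ => (2 * Real.pi : ℝ)),
          ‖f ((T / (2 * Real.pi)) • x)‖ ^ 2 := by
    rw [hIIdef, scaling T f hT, ← mul_assoc]
    congr 1
    rw [div_pow, inv_div]
    field_simp
  have hcnn : (0:ℝ) ≤ ((2 * Real.pi : ℝ) ^ n)⁻¹ := by positivity
  have h1 : SS ≤ Kmin⁻¹ ^ 2 * II := by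
    rw [hSig, hI, mul_left_comm]
    exact mul_le_mul_of_nonneg_left hW_upper hcnn
  have h2 : Kmax⁻¹ ^ 2 * II ≤ SS := by
    rw [hSig, hI, mul_left_comm]
    exact mul_le_mul_of_nonneg_left hW_lower hcnn
  constructor
  · have h3 : Kmin ^ 2 * SS ≤ II := by
      calc Kmin ^ 2 * SS ≤ Kmin ^ 2 * (Kmin⁻¹ ^ 2 * II) :=
            mul_le_mul_of_nonneg_left h1 (sq_nonneg Kmin)
        _ = II := by field_simp
    calc Kmin * Real.sqrt SS = Real.sqrt (Kmin ^ 2 * SS) := by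
          rw [Real.sqrt_mul (sq_nonneg _), Real.sqrt_sq hKminpos.le]
      _ ≤ Real.sqrt II := Real.sqrt_le_sqrt h3
  · have h4 : II ≤ Kmax ^ 2 * SS := by
      calc II = Kmax ^ 2 * (Kmax⁻¹ ^ 2 * II) := by field_simp
        _ ≤ Kmax ^ 2 * SS := mul_le_mul_of_nonneg_left h2 (sq_nonneg Kmax)
    calc Real.sqrt II ≤ Real.sqrt (Kmax ^ 2 * SS) := Real.sqrt_le_sqrt h4
      _ = Kmax * Real.sqrt SS := by
          rw [Real.sqrt_mul (sq_nonneg _), Real.sqrt_sq hKmaxpos.le]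
end
end

section
/- (Poincaré inequality, non-resonant case.) Suppose that the point i(log θ)/(2π) = (i log θ_1/(2π), …, i log θ_n/(2π)) ∈ ℂ^n does not belong to ℤ^n, and set d := inf_{k ∈ ℤ^n} ‖ i(log θ)/(2π) − k ‖, the distance in ℂ^n (Euclidean norm) from i(log θ)/(2π) to ℤ^n. Then for every continuously differentiable (θ,T)-periodic function f : ℝ^n → ℂ, ( Σ_{j=1}^n ‖∂_{x_j} f‖²_{L²_{θ,T}} )^{1/2} ≥ (2π/T) · d · ‖f‖_{L²_{θ,T}}. -/
open MeasureTheory Real Finset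
open scoped Classical ENNReal

noncomputable section

/-- The `L²_{θ,T}` norm. -/
def thetaL2Norm {n : ℕ} (θ : Fin n → ℂ) (T : ℝ) (f : (Fin n → ℝ) → ℂ) : ℝ :=
  Real.sqrt ((1 / T ^ n) * ∫ x in Set.Icc (0 : Fin n → ℝ) (fun _ => T),
      ‖f x‖ ^ 2 * ∏ j, ‖θ j‖ ^ (-2 * x j / T))

lemma deriv_periodic' {T : ℝ} (h : ℝ → ℂ) (hper : ∀ t, h (t + T) = h t) (t : ℝ) :
    deriv h (t + T) = deriv h t := by
  have hfe : (fun s => h (s + T)) = h := funext hper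
  conv_rhs => rw [← hfe]
  rw [deriv_comp_add_const]

lemma fourierCoeffOn_congr' {a b b' : ℝ} (hab : a < b) (hbb : b = b') (f : ℝ → ℂ) (k : ℤ) :
    fourierCoeffOn hab f k = fourierCoeffOn (hbb ▸ hab) f k := by
  subst hbb; rfl

lemma fourierCoeffOn_deriv' {T : ℝ} (hT : (0:ℝ) < T) (h : ℝ → ℂ) (hh : ContDiff ℝ 1 h)
    (hperT : h T = h 0) (k : ℤ) :
    fourierCoeffOn hT (deriv h) k = (2 * Real.pi * Complex.I * k / T) * fourierCoeffOn hT h k := by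
  have hdiff : Differentiable ℝ h := hh.differentiable one_ne_zero
  have hdc : Continuous (deriv h) := hh.continuous_deriv le_rfl
  rcases eq_or_ne k 0 with rfl | hk
  · simp only [Int.cast_zero, mul_zero, zero_div, zero_mul]
    rw [fourierCoeffOn_eq_integral]
    simp only [neg_zero, fourier_zero, one_smul]
    rw [intervalIntegral.integral_deriv_eq_sub (fun x _ => hdiff x)
      (hdc.intervalIntegrable 0 T), hperT]
    simp
  · have key := fourierCoeffOn_of_hasDerivAt hT hk
      (fun x _ => (hdiff x).hasDerivAt) (hdc.intervalIntegrable 0 T)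
    rw [hperT, sub_self, mul_zero, zero_sub] at key
    have h2 : (2 * Real.pi * Complex.I * k : ℂ) ≠ 0 := by
      simp [Real.pi_ne_zero, Complex.I_ne_zero, hk]
    have hT' : (T : ℂ) ≠ 0 := by exact_mod_cast hT.ne'
    field_simp at key
    rw [div_mul_eq_mul_div, eq_div_iff hT']
    rw [Complex.ofReal_zero, sub_zero] at key
    linear_combination -key

lemma fourierCoeffOn_add_mul' {T : ℝ} (hT : (0:ℝ) < T) (u v : ℝ → ℂ) (hu : Continuous u)
    (hv : Continuous v) (μ : ℂ) (k : ℤ) :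
    fourierCoeffOn hT (fun t => u t + μ * v t) k
      = fourierCoeffOn hT u k + μ * fourierCoeffOn hT v k := by
  have hfc : Continuous fun x : ℝ => (fourier (-k) (x : AddCircle (T - 0)) : ℂ) :=
    (fourier (-k)).continuous.comp (AddCircle.continuous_mk' _)
  have hi1 : IntervalIntegrable (fun x : ℝ => (fourier (-k) (x : AddCircle (T - 0)) : ℂ) * u x)
      volume 0 T := (hfc.mul hu).intervalIntegrable 0 T
  have hi2 : IntervalIntegrable (fun x : ℝ => (fourier (-k) (x : AddCircle (T - 0)) : ℂ) * v x)
      volume 0 T := (hfc.mul hv).intervalIntegrable 0 T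
  rw [fourierCoeffOn_eq_integral, fourierCoeffOn_eq_integral, fourierCoeffOn_eq_integral]
  simp only [smul_eq_mul, mul_add, mul_left_comm _ μ _]
  rw [intervalIntegral.integral_add hi1 (hi2.const_mul μ),
    intervalIntegral.integral_const_mul, smul_add]
  congr 1
  rw [mul_comm μ, ← smul_mul_assoc, mul_comm]

lemma parseval_periodic {T : ℝ} (hT : (0:ℝ) < T) (h : ℝ → ℂ) (hc : Continuous h)
    (hper : ∀ t, h (t + T) = h t) :
    Summable (fun k : ℤ => ‖fourierCoeffOn hT h k‖ ^ 2) ∧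
      ∫ t in Set.Icc (0:ℝ) T, ‖h t‖ ^ 2 = T * ∑' k : ℤ, ‖fourierCoeffOn hT h k‖ ^ 2 := by
  haveI : Fact (0 < T) := ⟨hT⟩
  have h0T : h 0 = h (0 + T) := by rw [zero_add, ← hper 0, zero_add]
  set H : C(AddCircle T, ℂ) := ⟨AddCircle.liftIco T 0 h,
    AddCircle.liftIco_continuous h0T hc.continuousOn⟩ with hH
  have hco : ∀ k : ℤ, fourierCoeff (H : AddCircle T → ℂ) k = fourierCoeffOn hT h k := by
    intro k
    have h1 : (H : AddCircle T → ℂ) = AddCircle.liftIco T 0 h := rfl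
    rw [h1, fourierCoeff_liftIco_eq, ← fourierCoeffOn_congr' hT (zero_add T).symm]
  set HL := ContinuousMap.toLp (E := ℂ) 2 AddCircle.haarAddCircle ℂ H with hHL
  have hcoL : ∀ k : ℤ, fourierCoeff (HL : AddCircle T → ℂ) k = fourierCoeffOn hT h k := by
    intro k
    rw [hHL, fourierCoeff_toLp, hco]
  -- Parseval
  have key := tsum_sq_fourierCoeff HL
  have hrhs : ∫ t : AddCircle T, ‖HL t‖ ^ 2 ∂AddCircle.haarAddCircle
      = ∫ t : AddCircle T, ‖(H : AddCircle T → ℂ) t‖ ^ 2 ∂AddCircle.haarAddCircle := by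
    refine integral_congr_ae ?_
    filter_upwards [ContinuousMap.coeFn_toLp (p := 2) (μ := AddCircle.haarAddCircle) (𝕜 := ℂ) H]
      with t ht
    rw [hHL, ht]
  -- relate circle integral to interval integral
  have hHt : ∀ t ∈ Set.Ioc (0:ℝ) T, ‖(H : AddCircle T → ℂ) (↑t)‖ ^ 2 = ‖h t‖ ^ 2 := by
    intro t ht
    rcases eq_or_lt_of_le ht.2 with rfl | hlt
    · have e1 : ((t : ℝ) : AddCircle t) = ((0 : ℝ) : AddCircle t) := by
        rw [AddCircle.coe_period, QuotientAddGroup.mk_zero]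
      rw [e1]
      have h0 : (H : AddCircle t → ℂ) ((0:ℝ) : AddCircle t) = h 0 :=
        AddCircle.liftIco_coe_apply (by constructor <;> simp [hT.le, hT])
      rw [h0, ← hper 0, zero_add]
    · have h0 : (H : AddCircle T → ℂ) ((t:ℝ) : AddCircle T) = h t :=
        AddCircle.liftIco_coe_apply (by constructor <;> simp [ht.1.le, hlt])
      rw [h0]
  have hint : ∫ t in Set.Icc (0:ℝ) T, ‖h t‖ ^ 2
      = T * ∫ t : AddCircle T, ‖(H : AddCircle T → ℂ) t‖ ^ 2 ∂AddCircle.haarAddCircle := by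
    rw [integral_Icc_eq_integral_Ioc]
    have := AddCircle.integral_preimage T 0 (fun b : AddCircle T => ‖(H : AddCircle T → ℂ) b‖ ^ 2)
    rw [zero_add] at this
    rw [← setIntegral_congr_fun measurableSet_Ioc hHt, this,
      AddCircle.volume_eq_smul_haarAddCircle, integral_smul_measure,
      ENNReal.toReal_ofReal hT.le, smul_eq_mul]
  -- summability
  have hsum : Summable (fun k : ℤ => ‖fourierCoeffOn hT h k‖ ^ 2) := by
    have h2 : (0:ℝ) < (2 : ℝ≥0∞).toReal := by norm_num
    have := (lp.hasSum_norm h2 (fourierBasis.repr HL)).summable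
    simp only [ENNReal.toReal_ofNat] at this
    have h3 : ∀ k : ℤ, ‖fourierBasis.repr HL k‖ ^ (2:ℝ) = ‖fourierCoeffOn hT h k‖ ^ 2 := by
      intro k
      rw [fourierBasis_repr, hcoL k]
      rw [show ((2:ℝ)) = ((2:ℕ):ℝ) by norm_num, Real.rpow_natCast]
    exact (summable_congr h3).mp this
  refine ⟨hsum, ?_⟩
  rw [hint, ← hrhs, ← key]
  congr 1
  exact tsum_congr fun k => by rw [hcoL k]

lemma oneD {T : ℝ} (hT : (0:ℝ) < T) (μ : ℂ) (c : ℝ) (hc : 0 ≤ c)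
    (hck : ∀ k : ℤ, c ≤ ‖2 * Real.pi * Complex.I * (k:ℂ) / T + μ‖)
    (h : ℝ → ℂ) (hh : ContDiff ℝ 1 h) (hper : ∀ t, h (t + T) = h t) :
    c ^ 2 * ∫ t in Set.Icc (0:ℝ) T, ‖h t‖ ^ 2 ≤
      ∫ t in Set.Icc (0:ℝ) T, ‖deriv h t + μ * h t‖ ^ 2 := by
  have hdc : Continuous (deriv h) := hh.continuous_deriv le_rfl
  have hgc : Continuous fun t => deriv h t + μ * h t :=
    hdc.add (continuous_const.mul hh.continuous)
  have hgper : ∀ t, deriv h (t + T) + μ * h (t + T) = deriv h t + μ * h t := fun t => by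
    rw [deriv_periodic' h hper, hper]
  obtain ⟨hs1, he1⟩ := parseval_periodic hT h hh.continuous hper
  obtain ⟨hs2, he2⟩ := parseval_periodic hT _ hgc hgper
  rw [he1, he2]
  have hcoeff : ∀ k : ℤ, fourierCoeffOn hT (fun t => deriv h t + μ * h t) k
      = (2 * Real.pi * Complex.I * (k:ℂ) / T + μ) * fourierCoeffOn hT h k := by
    intro k
    rw [fourierCoeffOn_add_mul' hT _ _ hdc hh.continuous,
      fourierCoeffOn_deriv' hT h hh (by rw [← hper 0, zero_add]), add_mul]
  have hterm : ∀ k : ℤ, c ^ 2 * ‖fourierCoeffOn hT h k‖ ^ 2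
      ≤ ‖fourierCoeffOn hT (fun t => deriv h t + μ * h t) k‖ ^ 2 := by
    intro k
    rw [hcoeff k, norm_mul, mul_pow]
    exact mul_le_mul_of_nonneg_right (pow_le_pow_left₀ hc (hck k) 2)
      (by positivity)
  calc c ^ 2 * (T * ∑' k : ℤ, ‖fourierCoeffOn hT h k‖ ^ 2)
      = T * ∑' k : ℤ, c ^ 2 * ‖fourierCoeffOn hT h k‖ ^ 2 := by
        rw [tsum_mul_left]; ring
    _ ≤ T * ∑' k : ℤ, ‖fourierCoeffOn hT (fun t => deriv h t + μ * h t) k‖ ^ 2 := by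
        refine mul_le_mul_of_nonneg_left ?_ hT.le
        exact Summable.tsum_le_tsum hterm (hs1.mul_left _) hs2

lemma insertNth_eq_smul_add {m : ℕ} (j : Fin (m + 1)) (t : ℝ) (y : Fin m → ℝ) :
    j.insertNth t y = t • (Pi.single j 1 : Fin (m + 1) → ℝ) + j.insertNth (0:ℝ) y := by
  funext i
  rcases eq_or_ne i j with rfl | hij
  · simp
  · obtain ⟨k, rfl⟩ := Fin.exists_succAbove_eq hij
    simp [Pi.single_apply, Fin.succAbove_ne j k]

lemma insertNth_add_T {m : ℕ} (j : Fin (m + 1)) (T t : ℝ) (y : Fin m → ℝ) :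
    j.insertNth (t + T) y = j.insertNth t y + T • (Pi.single j 1 : Fin (m + 1) → ℝ) := by
  funext i
  rcases eq_or_ne i j with rfl | hij
  · simp
  · obtain ⟨k, rfl⟩ := Fin.exists_succAbove_eq hij
    simp [Pi.single_apply, Fin.succAbove_ne j k]

lemma insertNth_mem_box {m : ℕ} (T : ℝ) (j : Fin (m + 1)) (t : ℝ) (y : Fin m → ℝ) :
    j.insertNth t y ∈ Set.Icc (0 : Fin (m + 1) → ℝ) (fun _ => T)
      ↔ t ∈ Set.Icc (0:ℝ) T ∧ y ∈ Set.Icc (0 : Fin m → ℝ) (fun _ => T) := by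
  simp only [Set.mem_Icc, Pi.le_def]
  constructor
  · rintro ⟨h1, h2⟩
    refine ⟨⟨by simpa using h1 j, by simpa using h2 j⟩, ⟨fun i => ?_, fun i => ?_⟩⟩
    · simpa using h1 (j.succAbove i)
    · simpa using h2 (j.succAbove i)
  · rintro ⟨⟨ht1, ht2⟩, hy1, hy2⟩
    constructor <;> intro i <;> [skip; skip] <;>
    · rcases eq_or_ne i j with rfl | hij
      · simpa
      · obtain ⟨k, rfl⟩ := Fin.exists_succAbove_eq hij
        simp only [Fin.insertNth_apply_succAbove, Pi.zero_apply]
        first | exact hy1 k | exact hy2 k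

lemma box_slice {m : ℕ} {T : ℝ} (hT : (0:ℝ) < T) (j : Fin (m + 1))
    (φ : (Fin (m + 1) → ℝ) → ℝ) (hφ : Continuous φ) :
    (∫ x in Set.Icc (0 : Fin (m + 1) → ℝ) (fun _ => T), φ x
      = ∫ y in Set.Icc (0 : Fin m → ℝ) (fun _ => T), ∫ t in Set.Icc (0:ℝ) T,
          φ (j.insertNth t y))
    ∧ IntegrableOn (fun y => ∫ t in Set.Icc (0:ℝ) T, φ (j.insertNth t y))
        (Set.Icc (0 : Fin m → ℝ) (fun _ => T)) := by
  set e := MeasurableEquiv.piFinSuccAbove (fun _ : Fin (m + 1) => ℝ) j with he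
  have mp : MeasurePreserving e.symm
      ((volume : Measure ℝ).prod (volume : Measure (Fin m → ℝ))) volume := by
    have h2 := (volume_preserving_piFinSuccAbove (fun _ : Fin (m + 1) => ℝ) j).symm e
    rwa [MeasureTheory.Measure.volume_eq_prod] at h2
  have hset : e.symm ⁻¹' (Set.Icc (0 : Fin (m + 1) → ℝ) (fun _ => T))
      = Set.Icc (0:ℝ) T ×ˢ Set.Icc (0 : Fin m → ℝ) (fun _ => T) := by
    ext ⟨t, y⟩
    simp only [Set.mem_preimage, Set.mem_prod]
    rw [show e.symm (t, y) = j.insertNth t y from rfl]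
    exact insertNth_mem_box T j t y
  have key := mp.setIntegral_preimage_emb e.symm.measurableEmbedding φ
    (Set.Icc (0 : Fin (m + 1) → ℝ) (fun _ => T))
  rw [hset] at key
  have hcont : Continuous fun z : ℝ × (Fin m → ℝ) => φ (j.insertNth z.1 z.2) := by
    apply hφ.comp
    apply continuous_pi
    intro i
    rcases eq_or_ne i j with rfl | hij
    · simpa using continuous_fst
    · obtain ⟨k, rfl⟩ := Fin.exists_succAbove_eq hij
      simpa [Function.comp_def] using (continuous_apply k).comp continuous_snd
  have hint0 : IntegrableOn (fun z : ℝ × (Fin m → ℝ) => φ (j.insertNth z.1 z.2))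
      (Set.Icc (0:ℝ) T ×ˢ Set.Icc (0 : Fin m → ℝ) (fun _ => T))
      ((volume : Measure ℝ).prod (volume : Measure (Fin m → ℝ))) :=
    hcont.continuousOn.integrableOn_compact (isCompact_Icc.prod isCompact_Icc)
  have hint : Integrable (fun z : ℝ × (Fin m → ℝ) => φ (j.insertNth z.1 z.2))
      ((volume.restrict (Set.Icc (0:ℝ) T)).prod
        (volume.restrict (Set.Icc (0 : Fin m → ℝ) (fun _ => T)))) := by
    rwa [Measure.prod_restrict]
  have hfun : ∀ z : ℝ × (Fin m → ℝ), φ (e.symm z) = φ (j.insertNth z.1 z.2) := fun z => rfl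
  constructor
  · rw [← key]
    simp_rw [hfun]
    rw [← Measure.prod_restrict]
    exact integral_prod_symm _ hint
  · exact hint.integral_prod_right

lemma coord_ineq {m : ℕ} {T : ℝ} (hT : (0:ℝ) < T) (j : Fin (m + 1))
    (g : (Fin (m + 1) → ℝ) → ℂ) (hg : ContDiff ℝ 1 g)
    (hper : ∀ x, g (x + T • (Pi.single j 1 : Fin (m + 1) → ℝ)) = g x)
    (μ : ℂ) (c : ℝ) (hc : 0 ≤ c)
    (hck : ∀ k : ℤ, c ≤ ‖2 * Real.pi * Complex.I * (k:ℂ) / T + μ‖) :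
    c ^ 2 * ∫ x in Set.Icc (0 : Fin (m + 1) → ℝ) (fun _ => T), ‖g x‖ ^ 2
      ≤ ∫ x in Set.Icc (0 : Fin (m + 1) → ℝ) (fun _ => T),
          ‖fderiv ℝ g x (Pi.single j 1) + μ * g x‖ ^ 2 := by
  have hgd : Differentiable ℝ g := hg.differentiable one_ne_zero
  have hgc : Continuous g := hg.continuous
  have hdgc : Continuous fun x => fderiv ℝ g x (Pi.single j 1) :=
    (hg.continuous_fderiv one_ne_zero).clm_apply continuous_const
  set φ1 : (Fin (m + 1) → ℝ) → ℝ :=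
    fun x => ‖fderiv ℝ g x (Pi.single j 1) + μ * g x‖ ^ 2 with hφ1def
  set φ2 : (Fin (m + 1) → ℝ) → ℝ := fun x => ‖g x‖ ^ 2 with hφ2def
  have hφ1 : Continuous φ1 := ((hdgc.add (continuous_const.mul hgc)).norm).pow 2
  have hφ2 : Continuous φ2 := (hgc.norm).pow 2
  obtain ⟨hEq1, hInt1⟩ := box_slice hT j φ1 hφ1
  obtain ⟨hEq2, hInt2⟩ := box_slice hT j φ2 hφ2
  rw [hEq1, hEq2]
  -- slice derivative
  have hψ' : ∀ (y : Fin m → ℝ) (t : ℝ), HasDerivAt (fun s => g (j.insertNth s y))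
      (fderiv ℝ g (j.insertNth t y) (Pi.single j 1)) t := by
    intro y t
    have h1 : HasDerivAt (fun s : ℝ => s • (Pi.single j 1 : Fin (m + 1) → ℝ)
        + j.insertNth (0:ℝ) y) (Pi.single j 1) t := by
      simpa using ((hasDerivAt_id t).smul_const
        (Pi.single j 1 : Fin (m + 1) → ℝ)).add_const (j.insertNth (0:ℝ) y)
    have h2 := (hgd _).hasFDerivAt.comp_hasDerivAt t h1
    simp_rw [← insertNth_eq_smul_add j _ y] at h2
    exact h2
  have hyCD : ∀ y : Fin m → ℝ, ContDiff ℝ 1 (fun s => g (j.insertNth s y)) := by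
    intro y
    have h3 : ContDiff ℝ 1 (fun s : ℝ => s • (Pi.single j 1 : Fin (m + 1) → ℝ)
        + j.insertNth (0:ℝ) y) := (contDiff_id.smul contDiff_const).add contDiff_const
    have := hg.comp h3
    simp_rw [Function.comp_def, ← insertNth_eq_smul_add j _ y] at this
    exact this
  have hyper : ∀ (y : Fin m → ℝ) (t : ℝ),
      g (j.insertNth (t + T) y) = g (j.insertNth t y) := by
    intro y t
    rw [insertNth_add_T, hper]
  have inner : ∀ y : Fin m → ℝ,
      c ^ 2 * ∫ t in Set.Icc (0:ℝ) T, φ2 (j.insertNth t y)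
        ≤ ∫ t in Set.Icc (0:ℝ) T, φ1 (j.insertNth t y) := by
    intro y
    have h4 := oneD hT μ c hc hck (fun s => g (j.insertNth s y)) (hyCD y) (hyper y)
    have h5 : (fun t => ‖deriv (fun s => g (j.insertNth s y)) t
        + μ * g (j.insertNth t y)‖ ^ 2) = fun t => φ1 (j.insertNth t y) :=
      funext fun t => by rw [(hψ' y t).deriv]
    rw [← h5]
    exact h4
  calc c ^ 2 * ∫ y in Set.Icc (0 : Fin m → ℝ) (fun _ => T),
        ∫ t in Set.Icc (0:ℝ) T, φ2 (j.insertNth t y)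
      = ∫ y in Set.Icc (0 : Fin m → ℝ) (fun _ => T),
          c ^ 2 * ∫ t in Set.Icc (0:ℝ) T, φ2 (j.insertNth t y) := by
        rw [integral_const_mul]
    _ ≤ ∫ y in Set.Icc (0 : Fin m → ℝ) (fun _ => T),
          ∫ t in Set.Icc (0:ℝ) T, φ1 (j.insertNth t y) :=
        integral_mono (hInt2.const_mul _) hInt1 inner

def ellCLM {n : ℕ} (T : ℝ) (L : Fin n → ℂ) : (Fin n → ℝ) →L[ℝ] ℂ :=
  ∑ j, (L j / T) • (Complex.ofRealCLM.comp (ContinuousLinearMap.proj j))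

lemma ellCLM_apply {n : ℕ} (T : ℝ) (L : Fin n → ℂ) (x : Fin n → ℝ) :
    ellCLM T L x = ∑ j, (L j / T) * (x j : ℂ) := by
  simp [ellCLM, ContinuousLinearMap.sum_apply]

lemma ellCLM_single {n : ℕ} (T : ℝ) (L : Fin n → ℂ) (j : Fin n) :
    ellCLM T L (Pi.single j 1) = L j / T := by
  rw [ellCLM_apply]
  rw [Finset.sum_eq_single j]
  · simp
  · intro i _ hij
    simp [Pi.single_apply, hij]
  · simp

lemma ellCLM_re {n : ℕ} (T : ℝ) (L : Fin n → ℂ) (x : Fin n → ℝ) :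
    (ellCLM T L x).re = ∑ j, (L j).re * x j / T := by
  rw [ellCLM_apply, Complex.re_sum]
  refine Finset.sum_congr rfl fun j _ => ?_
  rw [div_mul_eq_mul_div]
  rw [Complex.div_ofReal_re]
  congr 1
  rw [Complex.mul_re]
  simp

lemma norm_exp_ell {n : ℕ} (T : ℝ) (L : Fin n → ℂ) (x : Fin n → ℝ) :
    ‖Complex.exp (-(ellCLM T L x))‖ = Real.exp (-(ellCLM T L x).re) := by
  rw [Complex.norm_exp, Complex.neg_re]

lemma weight_eq {n : ℕ} {T : ℝ} (hT : (0:ℝ) < T) (θ L : Fin n → ℂ)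
    (hL : ∀ j, Complex.exp (L j) = θ j) (x : Fin n → ℝ) :
    (∏ j, ‖θ j‖ ^ (-2 * x j / T)) = ‖Complex.exp (-(ellCLM T L x))‖ ^ 2 := by
  have h1 : ∀ j, ‖θ j‖ ^ (-2 * x j / T) = Real.exp ((L j).re * (-2 * x j / T)) := by
    intro j
    rw [← hL j, Complex.norm_exp,
      Real.rpow_def_of_pos (Real.exp_pos _), Real.log_exp]
  simp_rw [h1]
  rw [← Real.exp_sum, norm_exp_ell, ← Real.exp_nat_mul]
  congr 1
  rw [ellCLM_re, ← Finset.sum_neg_distrib, Finset.mul_sum]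
  refine Finset.sum_congr rfl fun j _ => ?_
  push_cast
  ring

lemma deriv_transform {n : ℕ} {T : ℝ} (hT : (0:ℝ) < T) (L : Fin n → ℂ)
    (f : (Fin n → ℝ) → ℂ) (hf : ContDiff ℝ 1 f) (j : Fin n) (x : Fin n → ℝ) :
    fderiv ℝ (fun x => f x * Complex.exp (-(ellCLM T L x))) x (Pi.single j 1)
      + (L j / T) * (f x * Complex.exp (-(ellCLM T L x)))
    = Complex.exp (-(ellCLM T L x)) * fderiv ℝ f x (Pi.single j 1) := by
  have hE : HasFDerivAt (fun x => Complex.exp (-(ellCLM T L x)))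
      (Complex.exp (-(ellCLM T L x)) • (-(ellCLM T L))) x :=
    (Complex.hasDerivAt_exp _).comp_hasFDerivAt x (ellCLM T L).hasFDerivAt.neg
  have hF := ((hf.differentiable one_ne_zero x).hasFDerivAt).mul hE
  rw [show (fun x => f x * Complex.exp (-(ellCLM T L x))) = (f * fun x => Complex.exp (-(ellCLM T L x))) from rfl, hF.fderiv]
  simp only [ContinuousLinearMap.add_apply, ContinuousLinearMap.smul_apply,
    ContinuousLinearMap.neg_apply, ellCLM_single, smul_eq_mul]
  ring

lemma g_contDiff {n : ℕ} {T : ℝ} (L : Fin n → ℂ) (f : (Fin n → ℝ) → ℂ)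
    (hf : ContDiff ℝ 1 f) :
    ContDiff ℝ 1 fun x => f x * Complex.exp (-(ellCLM T L x)) := by
  have hexp : ContDiff ℝ 1 Complex.exp := Complex.contDiff_exp
  exact hf.mul (hexp.comp (ellCLM T L).contDiff.neg)

lemma g_periodic {n : ℕ} {T : ℝ} (hT : (0:ℝ) < T) (θ L : Fin n → ℂ)
    (hL : ∀ j, Complex.exp (L j) = θ j) (f : (Fin n → ℝ) → ℂ)
    (hper : ∀ (x : Fin n → ℝ) (j : Fin n),
      f (x + T • (Pi.single j 1 : Fin n → ℝ)) = θ j * f x)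
    (j : Fin n) (x : Fin n → ℝ) :
    f (x + T • (Pi.single j 1 : Fin n → ℝ))
        * Complex.exp (-(ellCLM T L (x + T • (Pi.single j 1 : Fin n → ℝ))))
      = f x * Complex.exp (-(ellCLM T L x)) := by
  have hT' : (T:ℂ) ≠ 0 := by exact_mod_cast hT.ne'
  have h1 : ellCLM T L (x + T • (Pi.single j 1 : Fin n → ℝ)) = ellCLM T L x + L j := by
    rw [map_add]
    congr 1
    rw [(ellCLM T L).map_smul, ellCLM_single, Complex.real_smul]
    field_simp
  rw [hper x j, h1, neg_add, Complex.exp_add, ← hL j, Complex.exp_neg (L j)]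
  have h2 : Complex.exp (L j) ≠ 0 := Complex.exp_ne_zero _
  calc Complex.exp (L j) * f x * (Complex.exp (-(ellCLM T L x)) * (Complex.exp (L j))⁻¹)
      = f x * Complex.exp (-(ellCLM T L x)) * (Complex.exp (L j) * (Complex.exp (L j))⁻¹) := by
        ring
    _ = f x * Complex.exp (-(ellCLM T L x)) := by rw [mul_inv_cancel₀ h2, mul_one]

lemma round_nearest (x : ℝ) (k : ℤ) : |x - (round x : ℤ)| ≤ |x - (k : ℤ)| := by
  rcases eq_or_ne k (round x) with rfl | hk
  · exact le_rfl
  · have h1 : (1:ℝ) ≤ |(k:ℝ) - (round x : ℤ)| := by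
      rw [show ((k:ℝ) - (round x : ℤ)) = ((k - round x : ℤ) : ℝ) by push_cast; ring]
      exact_mod_cast Int.one_le_abs (sub_ne_zero.mpr hk)
    have h2 : |x - (round x : ℤ)| ≤ 1 / 2 := by
      have := abs_sub_round x
      simpa using this
    have h3 : |(k:ℝ) - (round x:ℤ)| ≤ |(k:ℝ) - x| + |x - ((round x : ℤ) : ℝ)| := abs_sub_le _ _ _
    have h4 : |x - (k:ℝ)| = |(k:ℝ) - x| := abs_sub_comm _ _
    push_cast at h1 h2 h3 h4 ⊢
    linarith

lemma norm_sub_round_le (z : ℂ) (k : ℤ) :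
    ‖z - ((round z.re : ℤ) : ℂ)‖ ≤ ‖z - (k : ℂ)‖ := by
  have key : ∀ i : ℤ, ‖z - (i:ℂ)‖ ^ 2 = (z.re - i) ^ 2 + z.im ^ 2 := by
    intro i
    rw [Complex.sq_norm, Complex.normSq_apply, Complex.sub_re,
      Complex.sub_im, Complex.intCast_re, Complex.intCast_im, sub_zero]
    ring
  have hsq : ‖z - ((round z.re : ℤ) : ℂ)‖ ^ 2 ≤ ‖z - (k : ℂ)‖ ^ 2 := by
    rw [key, key]
    have h5 : (z.re - (round z.re : ℤ)) ^ 2 ≤ (z.re - (k:ℤ)) ^ 2 := by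
      rw [← sq_abs (z.re - (round z.re : ℤ)), ← sq_abs (z.re - (k:ℤ))]
      exact pow_le_pow_left₀ (abs_nonneg _) (round_nearest z.re k) 2
    linarith
  exact (pow_le_pow_iff_left₀ (norm_nonneg _) (norm_nonneg _) (by norm_num)).mp hsq
set_option maxHeartbeats 1000000 in
theorem stmt13 {n : ℕ} (hn : 1 ≤ n) (T : ℝ) (hT : 0 < T) (θ : Fin n → ℂ)
    (hθ : ∀ j, θ j ≠ 0) (L : Fin n → ℂ) (hL : ∀ j, Complex.exp (L j) = θ j)
    (hnr : ¬ ∃ k : Fin n → ℤ, ∀ j, Complex.I * L j / (2 * Real.pi) = (k j : ℂ))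
    (f : (Fin n → ℝ) → ℂ) (hf : ContDiff ℝ 1 f) (hper : ThetaPeriodic θ T f) :
    Real.sqrt (∑ j : Fin n, thetaL2Norm θ T (fun x => fderiv ℝ f x (Pi.single j 1)) ^ 2) ≥
      (2 * Real.pi / T) *
        (⨅ k : Fin n → ℤ,
          Real.sqrt (∑ j : Fin n, ‖Complex.I * L j / (2 * Real.pi) - (k j : ℂ)‖ ^ 2)) *
        thetaL2Norm θ T f := by
  obtain ⟨m, rfl⟩ : ∃ m, n = m + 1 := ⟨n - 1, (Nat.succ_pred_eq_of_pos hn).symm⟩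
  clear hn hnr
  have hπ : (0:ℝ) < Real.pi := Real.pi_pos
  have hTne : (T:ℂ) ≠ 0 := by exact_mod_cast hT.ne'
  have hπne : ((Real.pi:ℝ):ℂ) ≠ 0 := by exact_mod_cast Real.pi_ne_zero
  set g : (Fin (m+1) → ℝ) → ℂ := fun x => f x * Complex.exp (-(ellCLM T L x)) with hgdef
  have hgCD : ContDiff ℝ 1 g := g_contDiff L f hf
  have hgper : ∀ (j : Fin (m+1)) (x : Fin (m+1) → ℝ),
      g (x + T • (Pi.single j 1 : Fin (m+1) → ℝ)) = g x := fun j x =>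
    g_periodic hT θ L hL f hper j x
  set box := Set.Icc (0 : Fin (m+1) → ℝ) (fun _ => T) with hbox
  set B := ∫ x in box, ‖g x‖^2 with hB
  have hB0 : 0 ≤ B := integral_nonneg fun x => by positivity
  set z : Fin (m+1) → ℂ := fun j => Complex.I * L j / (2 * Real.pi) with hz
  set K : Fin (m+1) → ℤ := fun j => round ((z j).re) with hK
  have hw0 : ∀ j, (0:ℝ) ≤ ‖z j - ((K j : ℤ) : ℂ)‖ := fun j => norm_nonneg _
  have hLz : ∀ j, L j = -(2 * (Real.pi:ℂ)) * Complex.I * z j := by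
    intro j
    rw [hz]
    simp only []
    field_simp
    linear_combination (L j) * Complex.I_sq
  -- the L² norm of f
  have hnf : thetaL2Norm θ T f = Real.sqrt ((1 / T^(m+1)) * B) := by
    rw [thetaL2Norm, hB, hbox]
    congr 2
    refine setIntegral_congr_fun measurableSet_Icc fun x _ => ?_
    rw [weight_eq hT θ L hL x, hgdef]
    rw [norm_mul, mul_pow]
  -- the L² norms of the partial derivatives
  have hA0 : ∀ j : Fin (m+1),
      (0:ℝ) ≤ ∫ x in box, ‖fderiv ℝ g x (Pi.single j 1) + (L j / T) * g x‖^2 :=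
    fun j => integral_nonneg fun x => by positivity
  have hnd : ∀ j : Fin (m+1), thetaL2Norm θ T (fun x => fderiv ℝ f x (Pi.single j 1))
      = Real.sqrt ((1 / T^(m+1)) *
          ∫ x in box, ‖fderiv ℝ g x (Pi.single j 1) + (L j / T) * g x‖^2) := by
    intro j
    rw [thetaL2Norm, hbox]
    congr 2
    refine setIntegral_congr_fun measurableSet_Icc fun x _ => ?_
    rw [weight_eq hT θ L hL x, hgdef]
    simp only []
    rw [deriv_transform hT L f hf j x, norm_mul, mul_pow]
    ring
  -- spectral lower bound hypothesis for each coordinate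
  have hck : ∀ (j : Fin (m+1)) (k : ℤ),
      (2*Real.pi/T) * ‖z j - ((K j : ℤ) : ℂ)‖
        ≤ ‖2 * Real.pi * Complex.I * (k:ℂ) / T + L j / T‖ := by
    intro j k
    have hfac : (2 * (Real.pi:ℂ) * Complex.I * (k:ℂ) / T + L j / T)
        = (2 * Real.pi * Complex.I / T) * ((k:ℂ) - z j) := by
      rw [hLz j]
      field_simp
      ring
    rw [hfac, norm_mul]
    have hn1 : ‖2 * ((Real.pi:ℝ):ℂ) * Complex.I / (T:ℂ)‖ = 2 * Real.pi / T := by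
      rw [norm_div, norm_mul, norm_mul, Complex.norm_I, mul_one]
      rw [Complex.norm_real, Complex.norm_real]
      simp [abs_of_pos hπ, abs_of_pos hT]
    rw [hn1]
    have hn2 : ‖z j - ((K j : ℤ) : ℂ)‖ ≤ ‖(k:ℂ) - z j‖ := by
      rw [← norm_neg ((k:ℂ) - z j), neg_sub]
      exact norm_sub_round_le (z j) k
    exact mul_le_mul_of_nonneg_left hn2 (by positivity)
  have hcore : ∀ j : Fin (m+1), (2*Real.pi/T)^2 * ‖z j - ((K j : ℤ) : ℂ)‖^2 * B
      ≤ ∫ x in box, ‖fderiv ℝ g x (Pi.single j 1) + (L j / T) * g x‖^2 := by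
    intro j
    have h6 := coord_ineq hT j g hgCD (fun x => hgper j x) (L j / T)
      ((2*Real.pi/T) * ‖z j - ((K j : ℤ) : ℂ)‖) (by positivity) (hck j)
    calc (2*Real.pi/T)^2 * ‖z j - ((K j : ℤ) : ℂ)‖^2 * B
        = ((2*Real.pi/T) * ‖z j - ((K j : ℤ) : ℂ)‖)^2 * B := by ring
      _ ≤ _ := h6
  -- infimum bound
  have hd_le : (⨅ k : Fin (m+1) → ℤ,
        Real.sqrt (∑ j, ‖Complex.I * L j / (2 * Real.pi) - ((k j : ℤ) : ℂ)‖ ^ 2))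
      ≤ Real.sqrt (∑ j, ‖z j - ((K j : ℤ) : ℂ)‖^2) := by
    have hbdd : BddBelow (Set.range fun k : Fin (m+1) → ℤ =>
        Real.sqrt (∑ j, ‖Complex.I * L j / (2 * Real.pi) - ((k j : ℤ) : ℂ)‖ ^ 2)) := by
      refine ⟨0, ?_⟩
      rintro r ⟨k, rfl⟩
      positivity
    have h7 := ciInf_le hbdd K
    refine h7.trans_eq ?_
    congr 1
  have hd0 : (0:ℝ) ≤ ⨅ k : Fin (m+1) → ℤ,
      Real.sqrt (∑ j, ‖Complex.I * L j / (2 * Real.pi) - ((k j : ℤ) : ℂ)‖ ^ 2) :=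
    le_ciInf fun k => Real.sqrt_nonneg _
  -- assemble
  rw [ge_iff_le, hnf]
  have hsum_eq : (∑ j : Fin (m+1),
        thetaL2Norm θ T (fun x => fderiv ℝ f x (Pi.single j 1)) ^ 2)
      = ∑ j : Fin (m+1), (1/T^(m+1)) *
          ∫ x in box, ‖fderiv ℝ g x (Pi.single j 1) + (L j / T) * g x‖^2 := by
    refine Finset.sum_congr rfl fun j _ => ?_
    rw [hnd j, Real.sq_sqrt (mul_nonneg (by positivity) (hA0 j))]
  rw [hsum_eq]
  have key2 : (2*Real.pi/T)^2 * (∑ j, ‖z j - ((K j : ℤ) : ℂ)‖^2) * ((1/T^(m+1)) * B)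
      ≤ ∑ j : Fin (m+1), (1/T^(m+1)) *
          ∫ x in box, ‖fderiv ℝ g x (Pi.single j 1) + (L j / T) * g x‖^2 := by
    calc (2*Real.pi/T)^2 * (∑ j, ‖z j - ((K j : ℤ) : ℂ)‖^2) * ((1/T^(m+1)) * B)
        = ∑ j : Fin (m+1), (1/T^(m+1)) *
            ((2*Real.pi/T)^2 * ‖z j - ((K j : ℤ) : ℂ)‖^2 * B) := by
          rw [Finset.mul_sum, Finset.sum_mul]
          refine Finset.sum_congr rfl fun j _ => ?_
          ring
      _ ≤ _ := Finset.sum_le_sum fun j _ =>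
          mul_le_mul_of_nonneg_left (hcore j) (by positivity)
  calc (2 * Real.pi / T) * (⨅ k : Fin (m+1) → ℤ,
        Real.sqrt (∑ j, ‖Complex.I * L j / (2 * Real.pi) - ((k j : ℤ) : ℂ)‖ ^ 2))
        * Real.sqrt ((1/T^(m+1)) * B)
      ≤ (2 * Real.pi / T) * Real.sqrt (∑ j, ‖z j - ((K j : ℤ) : ℂ)‖^2)
        * Real.sqrt ((1/T^(m+1)) * B) := by
        refine mul_le_mul_of_nonneg_right
          (mul_le_mul_of_nonneg_left hd_le (by positivity)) (Real.sqrt_nonneg _)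
    _ = Real.sqrt ((2*Real.pi/T)^2 * (∑ j, ‖z j - ((K j : ℤ) : ℂ)‖^2) * ((1/T^(m+1)) * B)) := by
        have e1 : Real.sqrt ((2*Real.pi/T)^2 * (∑ j, ‖z j - ((K j : ℤ) : ℂ)‖^2)
              * ((1/T^(m+1)) * B))
            = Real.sqrt ((2*Real.pi/T)^2 * (∑ j, ‖z j - ((K j : ℤ) : ℂ)‖^2))
              * Real.sqrt ((1/T^(m+1)) * B) := Real.sqrt_mul (by positivity) _
        have e2 : Real.sqrt ((2*Real.pi/T)^2 * (∑ j, ‖z j - ((K j : ℤ) : ℂ)‖^2))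
            = Real.sqrt ((2*Real.pi/T)^2) * Real.sqrt (∑ j, ‖z j - ((K j : ℤ) : ℂ)‖^2) :=
          Real.sqrt_mul (by positivity) _
        have e3 : Real.sqrt ((2*Real.pi/T)^2) = 2*Real.pi/T := Real.sqrt_sq (by positivity)
        rw [e1, e2, e3]
    _ ≤ _ := Real.sqrt_le_sqrt key2
end
end

section
/- Let θ ∈ ℂ\{0}, T > 0, λ ∈ ℂ with θ ≠ e^{-Tλ}, and let f : ℝ → ℂ be smooth and (θ,T)-periodic. Define u(x) := (1 − θ^{-1} e^{-Tλ})^{-1} ∫_0^T e^{-λ s} f(x − s) ds. Then: (i) u is smooth, (θ,T)-periodic and satisfies u'(x) + λ u(x) = f(x) for all x ∈ ℝ; (ii) u(x) = (θ e^{Tλ} − 1)^{-1} ∫_0^T e^{λ s} f(x + s) ds for all x ∈ ℝ; (iii) u is the unique (θ,T)-periodic solution: if v : ℝ → ℂ is differentiable, (θ,T)-periodic and satisfies v' + λ v = f, then v = u. -/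
open MeasureTheory Real intervalIntegral

noncomputable section

/-- A function `u : ℝ → ℂ` is `(θ,T)`-periodic if `u (x + T) = θ * u x` for every `x`. -/
def ThetaPeriodic1 (θ : ℂ) (T : ℝ) (u : ℝ → ℂ) : Prop :=
  ∀ x : ℝ, u (x + T) = θ * u x

theorem stmt16 (θ : ℂ) (hθ : θ ≠ 0) (T : ℝ) (hT : 0 < T) (lam : ℂ)
    (hres : θ ≠ Complex.exp (-(T : ℂ) * lam))
    (f : ℝ → ℂ) (hf : ContDiff ℝ (⊤ : ℕ∞) f) (hper : ThetaPeriodic1 θ T f)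
    (u : ℝ → ℂ)
    (hu : ∀ x : ℝ, u x = (1 - θ⁻¹ * Complex.exp (-(T : ℂ) * lam))⁻¹ *
      ∫ s in (0:ℝ)..T, Complex.exp (-(lam * (s : ℂ))) * f (x - s)) :
    ContDiff ℝ (⊤ : ℕ∞) u ∧ ThetaPeriodic1 θ T u ∧
    (∀ x : ℝ, deriv u x + lam * u x = f x) ∧
    (∀ x : ℝ, u x = (θ * Complex.exp ((T : ℂ) * lam) - 1)⁻¹ *
      ∫ s in (0:ℝ)..T, Complex.exp (lam * (s : ℂ)) * f (x + s)) ∧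
    (∀ v : ℝ → ℂ, Differentiable ℝ v → ThetaPeriodic1 θ T v →
      (∀ x : ℝ, deriv v x + lam * v x = f x) → v = u) := by
  -- notation
  set C : ℂ := (1 - θ⁻¹ * Complex.exp (-(T : ℂ) * lam))⁻¹ with hC_def
  set g : ℝ → ℂ := fun t => Complex.exp (lam * t) * f t with hg_def
  have hgc : Continuous g := by
    exact (Complex.continuous_exp.comp (by continuity)).mul hf.continuous
  have hg_smooth : ContDiff ℝ (⊤ : ℕ∞) g := by
    exact (Complex.contDiff_exp.comp (contDiff_const.mul Complex.ofRealCLM.contDiff)).mul hf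
  set G : ℝ → ℂ := fun x => ∫ t in (0:ℝ)..x, g t with hG_def
  have hG_deriv : ∀ x : ℝ, HasDerivAt G (g x) x := fun x =>
    intervalIntegral.integral_hasDerivAt_right (hgc.intervalIntegrable 0 x)
      (hgc.stronglyMeasurableAtFilter volume _) hgc.continuousAt
  have hG_diff : Differentiable ℝ G := fun x => (hG_deriv x).differentiableAt
  have hG_smooth : ContDiff ℝ (⊤ : ℕ∞) G := by
    rw [contDiff_infty_iff_deriv]
    refine ⟨hG_diff, ?_⟩
    have hd : deriv G = g := funext fun x => (hG_deriv x).deriv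
    rw [hd]; exact hg_smooth
  -- nonvanishing constants
  have hexpT : Complex.exp (-(T : ℂ) * lam) ≠ 0 := Complex.exp_ne_zero _
  have hc0 : (1 : ℂ) - θ⁻¹ * Complex.exp (-(T : ℂ) * lam) ≠ 0 := by
    intro h
    apply hres
    have h1 : θ⁻¹ * Complex.exp (-(T : ℂ) * lam) = 1 := by
      have := sub_eq_zero.mp h; exact this.symm
    calc θ = θ * (θ⁻¹ * Complex.exp (-(T : ℂ) * lam)) := by rw [h1, mul_one]
    _ = (θ * θ⁻¹) * Complex.exp (-(T : ℂ) * lam) := by ring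
    _ = Complex.exp (-(T : ℂ) * lam) := by rw [mul_inv_cancel₀ hθ, one_mul]
  have hexp_cancel : Complex.exp ((T : ℂ) * lam) * Complex.exp (-(T : ℂ) * lam) = 1 := by
    rw [← Complex.exp_add]; ring_nf; exact Complex.exp_zero
  have hd : θ * Complex.exp ((T : ℂ) * lam) - 1 ≠ 0 := by
    intro h
    apply hres
    have h1 : θ * Complex.exp ((T : ℂ) * lam) = 1 := sub_eq_zero.mp h
    calc θ = θ * (Complex.exp ((T : ℂ) * lam) * Complex.exp (-(T : ℂ) * lam)) := by
            rw [hexp_cancel, mul_one]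
    _ = (θ * Complex.exp ((T : ℂ) * lam)) * Complex.exp (-(T : ℂ) * lam) := by ring
    _ = Complex.exp (-(T : ℂ) * lam) := by rw [h1, one_mul]
  -- key integral representation
  have key : ∀ x : ℝ, (∫ s in (0:ℝ)..T, Complex.exp (-(lam * (s : ℂ))) * f (x - s))
      = Complex.exp (-(lam * (x : ℂ))) * (G x - G (x - T)) := by
    intro x
    have h1 : ∀ s : ℝ, Complex.exp (-(lam * (s : ℂ))) * f (x - s)
        = Complex.exp (-(lam * (x : ℂ))) * g (x - s) := by
      intro s
      simp only [hg_def]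
      rw [← mul_assoc, ← Complex.exp_add]
      congr 2
      push_cast
      ring
    calc (∫ s in (0:ℝ)..T, Complex.exp (-(lam * (s : ℂ))) * f (x - s))
        = ∫ s in (0:ℝ)..T, Complex.exp (-(lam * (x : ℂ))) * g (x - s) := by
          simp only [h1]
    _ = Complex.exp (-(lam * (x : ℂ))) * ∫ s in (0:ℝ)..T, g (x - s) :=
          intervalIntegral.integral_const_mul _ _
    _ = Complex.exp (-(lam * (x : ℂ))) * ∫ t in (x - T)..(x - 0), g t := by
          rw [intervalIntegral.integral_comp_sub_left g x]
    _ = Complex.exp (-(lam * (x : ℂ))) * (G x - G (x - T)) := by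
          rw [sub_zero]
          congr 1
          rw [← intervalIntegral.integral_interval_sub_left
            (hgc.intervalIntegrable 0 x) (hgc.intervalIntegrable 0 (x - T))]
  have hu_eq : u = fun x : ℝ =>
      C * (Complex.exp (-(lam * (x : ℂ))) * (G x - G (x - T))) := by
    funext x
    rw [hu x, key x]
  -- smoothness
  have hE_smooth : ContDiff ℝ (⊤ : ℕ∞) (fun x : ℝ => Complex.exp (-(lam * (x : ℂ)))) :=
    Complex.contDiff_exp.comp (contDiff_const.mul Complex.ofRealCLM.contDiff).neg
  have hu_smooth : ContDiff ℝ (⊤ : ℕ∞) u := by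
    rw [hu_eq]
    exact contDiff_const.mul (hE_smooth.mul (hG_smooth.sub
      (hG_smooth.comp (contDiff_id.sub contDiff_const))))
  -- periodicity of f backwards
  have hfper' : ∀ x : ℝ, f (x - T) = θ⁻¹ * f x := by
    intro x
    have := hper (x - T)
    rw [sub_add_cancel] at this
    rw [this]
    field_simp
  -- the crucial pointwise identity
  have hgsub : ∀ x : ℝ, g x - g (x - T)
      = Complex.exp (lam * (x : ℂ)) * ((1 - θ⁻¹ * Complex.exp (-(T : ℂ) * lam)) * f x) := by
    intro x
    simp only [hg_def]
    rw [hfper' x]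
    have h2 : Complex.exp (lam * ((x : ℝ) - T : ℝ))
        = Complex.exp (lam * (x : ℂ)) * Complex.exp (-(T : ℂ) * lam) := by
      rw [← Complex.exp_add]
      congr 1
      push_cast
      ring
    rw [h2]
    ring
  have hEe : ∀ x : ℝ, Complex.exp (-(lam * (x : ℂ))) * Complex.exp (lam * (x : ℂ)) = 1 := by
    intro x
    rw [← Complex.exp_add]
    ring_nf
    exact Complex.exp_zero
  -- derivative
  have hu_hasDeriv : ∀ x : ℝ, HasDerivAt u (f x - lam * u x) x := by
    intro x
    have hE : HasDerivAt (fun y : ℝ => Complex.exp (-(lam * (y : ℂ))))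
        (-lam * Complex.exp (-(lam * (x : ℂ)))) x := by
      have h0 : HasDerivAt (fun y : ℝ => ((y : ℂ))) 1 x := Complex.ofRealCLM.hasDerivAt
      have h1 : HasDerivAt (fun y : ℝ => -(lam * (y : ℂ))) (-lam) x := by
        have h1' := (h0.const_mul lam).neg
        rw [mul_one] at h1'
        exact h1'
      simpa [mul_comm] using h1.cexp
    have hGT : HasDerivAt (fun y : ℝ => G (y - T)) (g (x - T)) x := by
      have hi : HasDerivAt (fun y : ℝ => y - T) 1 x := by
        simpa using (hasDerivAt_id x).sub_const T
      have hGT' := (hG_deriv (x - T)).scomp x hi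
      rw [one_smul] at hGT'
      exact hGT'
    have hΔ : HasDerivAt (fun y : ℝ => G y - G (y - T)) (g x - g (x - T)) x :=
      (hG_deriv x).sub hGT
    have hD : HasDerivAt u
        (C * ((-lam * Complex.exp (-(lam * (x : ℂ)))) * (G x - G (x - T))
          + Complex.exp (-(lam * (x : ℂ))) * (g x - g (x - T)))) x := by
      rw [hu_eq]
      exact (hE.mul hΔ).const_mul C
    convert hD using 1
    rw [hu_eq]
    simp only []
    rw [hgsub x]
    have : Complex.exp (-(lam * (x : ℂ))) * (Complex.exp (lam * (x : ℂ))
        * ((1 - θ⁻¹ * Complex.exp (-(T : ℂ) * lam)) * f x))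
        = (1 - θ⁻¹ * Complex.exp (-(T : ℂ) * lam)) * f x := by
      rw [← mul_assoc, hEe x, one_mul]
    have hCc : C * (1 - θ⁻¹ * Complex.exp (-(T : ℂ) * lam)) = 1 := by
      rw [hC_def]
      exact inv_mul_cancel₀ hc0
    calc f x - lam * (C * (Complex.exp (-(lam * (x : ℂ))) * (G x - G (x - T))))
        = (C * (1 - θ⁻¹ * Complex.exp (-(T : ℂ) * lam))) * f x
          - lam * (C * (Complex.exp (-(lam * (x : ℂ))) * (G x - G (x - T)))) := by
          rw [hCc, one_mul]
    _ = C * ((-lam * Complex.exp (-(lam * (x : ℂ)))) * (G x - G (x - T))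
          + Complex.exp (-(lam * (x : ℂ))) * (Complex.exp (lam * (x : ℂ))
            * ((1 - θ⁻¹ * Complex.exp (-(T : ℂ) * lam)) * f x))) := by
          rw [this]; ring
  have hu_ode : ∀ x : ℝ, deriv u x + lam * u x = f x := by
    intro x
    rw [(hu_hasDeriv x).deriv]
    ring
  -- shift identity for G
  have hΔT : ∀ x : ℝ, G (x + T) - G x
      = θ * Complex.exp ((T : ℂ) * lam) * (G x - G (x - T)) := by
    intro x
    have h1 : G (x + T) - G x = ∫ t in x..(x + T), g t := by
      rw [← intervalIntegral.integral_interval_sub_left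
        (hgc.intervalIntegrable 0 (x + T)) (hgc.intervalIntegrable 0 x)]
    have h2 : (∫ t in (x - T)..x, g (t + T)) = ∫ t in x..(x + T), g t := by
      rw [intervalIntegral.integral_comp_add_right g T]
      congr 1 <;> ring
    have h3 : ∀ t : ℝ, g (t + T) = θ * Complex.exp ((T : ℂ) * lam) * g t := by
      intro t
      simp only [hg_def]
      rw [hper t]
      have : Complex.exp (lam * ((t : ℝ) + T : ℝ))
          = Complex.exp ((T : ℂ) * lam) * Complex.exp (lam * (t : ℂ)) := by
        rw [← Complex.exp_add]; congr 1; push_cast; ring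
      rw [this]; ring
    have h4 : G x - G (x - T) = ∫ t in (x - T)..x, g t := by
      rw [← intervalIntegral.integral_interval_sub_left
        (hgc.intervalIntegrable 0 x) (hgc.intervalIntegrable 0 (x - T))]
    rw [h1, ← h2, h4]
    calc (∫ t in (x - T)..x, g (t + T))
        = ∫ t in (x - T)..x, θ * Complex.exp ((T : ℂ) * lam) * g t := by simp only [h3]
    _ = θ * Complex.exp ((T : ℂ) * lam) * ∫ t in (x - T)..x, g t :=
        intervalIntegral.integral_const_mul _ _
  -- periodicity of u
  have hu_per : ThetaPeriodic1 θ T u := by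
    intro x
    rw [hu_eq]
    simp only []
    have h5 : ((x + T : ℝ) : ℂ) = (x : ℂ) + (T : ℂ) := by push_cast; ring
    have h6 : (x + T : ℝ) - T = x := by ring
    rw [h6, hΔT x]
    have h7 : Complex.exp (-(lam * ((x + T : ℝ) : ℂ))) * Complex.exp ((T : ℂ) * lam)
        = Complex.exp (-(lam * (x : ℂ))) := by
      rw [← Complex.exp_add]
      congr 1
      rw [h5]
      ring
    calc C * (Complex.exp (-(lam * ((x + T : ℝ) : ℂ)))
          * (θ * Complex.exp ((T : ℂ) * lam) * (G x - G (x - T))))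
        = θ * (C * ((Complex.exp (-(lam * ((x + T : ℝ) : ℂ))) * Complex.exp ((T : ℂ) * lam))
            * (G x - G (x - T)))) := by ring
    _ = θ * (C * (Complex.exp (-(lam * (x : ℂ))) * (G x - G (x - T)))) := by rw [h7]
  -- second formula
  have hform2 : ∀ x : ℝ, u x = (θ * Complex.exp ((T : ℂ) * lam) - 1)⁻¹ *
      ∫ s in (0:ℝ)..T, Complex.exp (lam * (s : ℂ)) * f (x + s) := by
    intro x
    have h1 : ∀ s : ℝ, Complex.exp (lam * (s : ℂ)) * f (x + s)
        = Complex.exp (-(lam * (x : ℂ))) * g (x + s) := by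
      intro s
      simp only [hg_def]
      rw [← mul_assoc, ← Complex.exp_add]
      congr 2
      push_cast
      ring
    have h2 : (∫ s in (0:ℝ)..T, Complex.exp (lam * (s : ℂ)) * f (x + s))
        = Complex.exp (-(lam * (x : ℂ))) * (G (x + T) - G x) := by
      calc (∫ s in (0:ℝ)..T, Complex.exp (lam * (s : ℂ)) * f (x + s))
          = ∫ s in (0:ℝ)..T, Complex.exp (-(lam * (x : ℂ))) * g (x + s) := by simp only [h1]
      _ = Complex.exp (-(lam * (x : ℂ))) * ∫ s in (0:ℝ)..T, g (x + s) :=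
          intervalIntegral.integral_const_mul _ _
      _ = Complex.exp (-(lam * (x : ℂ))) * ∫ t in (x + 0)..(x + T), g t := by
          rw [intervalIntegral.integral_comp_add_left g x]
      _ = Complex.exp (-(lam * (x : ℂ))) * (G (x + T) - G x) := by
          rw [add_zero]
          congr 1
          rw [← intervalIntegral.integral_interval_sub_left
            (hgc.intervalIntegrable 0 (x + T)) (hgc.intervalIntegrable 0 x)]
    rw [h2, hΔT x, hu_eq]
    simp only []
    have hkey : (1 - θ⁻¹ * Complex.exp (-(T : ℂ) * lam)) * (θ * Complex.exp ((T : ℂ) * lam))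
        = θ * Complex.exp ((T : ℂ) * lam) - 1 := by
      linear_combination (-(Complex.exp ((T : ℂ) * lam) * Complex.exp (-(T : ℂ) * lam))) *
        mul_inv_cancel₀ hθ - hexp_cancel
    have hCd : C = (θ * Complex.exp ((T : ℂ) * lam) - 1)⁻¹ * (θ * Complex.exp ((T : ℂ) * lam)) := by
      rw [hC_def]
      refine inv_eq_of_mul_eq_one_right ?_
      calc (1 - θ⁻¹ * Complex.exp (-(T : ℂ) * lam)) *
            ((θ * Complex.exp ((T : ℂ) * lam) - 1)⁻¹ * (θ * Complex.exp ((T : ℂ) * lam)))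
          = (θ * Complex.exp ((T : ℂ) * lam) - 1)⁻¹ *
            ((1 - θ⁻¹ * Complex.exp (-(T : ℂ) * lam)) * (θ * Complex.exp ((T : ℂ) * lam))) := by
            ring
      _ = (θ * Complex.exp ((T : ℂ) * lam) - 1)⁻¹ * (θ * Complex.exp ((T : ℂ) * lam) - 1) := by
            rw [hkey]
      _ = 1 := inv_mul_cancel₀ hd
    rw [hCd]
    ring
  refine ⟨hu_smooth, hu_per, hu_ode, hform2, ?_⟩
  -- uniqueness
  intro v hv hvper hveq
  have hu_diff : Differentiable ℝ u := hu_smooth.differentiable (by simp)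
  set w : ℝ → ℂ := fun x => v x - u x with hw_def
  have hw_deriv : ∀ x : ℝ, HasDerivAt w (-lam * w x) x := by
    intro x
    have h1 : HasDerivAt v (f x - lam * v x) x := by
      have h2 := (hv x).hasDerivAt
      have h3 : deriv v x = f x - lam * v x := by
        have := hveq x; linear_combination this
      rwa [h3] at h2
    have h4 := h1.sub (hu_hasDeriv x)
    convert h4 using 1
    · rfl
    · rfl
    simp only [hw_def]
    ring
  set h : ℝ → ℂ := fun x => Complex.exp (lam * (x : ℂ)) * w x with hh_def
  have hh_deriv : ∀ x : ℝ, HasDerivAt h 0 x := by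
    intro x
    have hE : HasDerivAt (fun y : ℝ => Complex.exp (lam * (y : ℂ)))
        (lam * Complex.exp (lam * (x : ℂ))) x := by
      have h0 : HasDerivAt (fun y : ℝ => ((y : ℂ))) 1 x := Complex.ofRealCLM.hasDerivAt
      have h1 : HasDerivAt (fun y : ℝ => lam * (y : ℂ)) lam x := by
        simpa using h0.const_mul lam
      simpa [mul_comm] using h1.cexp
    have := hE.mul (hw_deriv x)
    convert this using 1
    · rfl
    · rfl
    ring
  have hh_const : ∀ x : ℝ, h x = h 0 := by
    intro x
    exact is_const_of_deriv_eq_zero (fun y => (hh_deriv y).differentiableAt)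
      (fun y => (hh_deriv y).deriv) x 0
  have hw_per : w (0 + T) = θ * w 0 := by
    simp only [hw_def]
    rw [hvper 0, hu_per 0]
    ring
  have hw0 : w 0 = 0 := by
    have h1 : h T = h 0 := hh_const T
    have h2 : h 0 = w 0 := by
      simp [hh_def]
    have h3 : h T = Complex.exp (lam * (T : ℂ)) * (θ * w 0) := by
      simp only [hh_def]
      rw [show (T : ℝ) = 0 + T by ring] 
      rw [hw_per]
    rw [h3, h2] at h1
    rw [show lam * (T : ℂ) = (T : ℂ) * lam by ring] at h1
    have h4 : (θ * Complex.exp ((T : ℂ) * lam) - 1) * w 0 = 0 := by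
      linear_combination h1
    rcases mul_eq_zero.mp h4 with h5 | h5
    · exact absurd h5 hd
    · exact h5
  have hw_all : ∀ x : ℝ, w x = 0 := by
    intro x
    have h1 : h x = 0 := by
      rw [hh_const x]
      simp [hh_def, hw0]
    have h2 := Complex.exp_ne_zero (lam * (x : ℂ))
    simp only [hh_def] at h1
    rcases mul_eq_zero.mp h1 with h3 | h3
    · exact absurd h3 h2
    · exact h3
  funext x
  have hx := hw_all x
  simp only [hw_def] at hx
  exact sub_eq_zero.mp hx
end
end

section
/- Let θ ∈ ℂ\{0}, T > 0, let λ : ℝ → ℂ be smooth and T-periodic, set λ₀ := (1/T) ∫_0^T λ(x) dx, and assume θ ≠ e^{-Tλ₀}. Let f : ℝ → ℂ be smooth and (θ,T)-periodic. Define u(x) := (1 − θ^{-1} e^{-Tλ₀})^{-1} ∫_0^T e^{-∫_{x-s}^{x} λ(τ) dτ} f(x − s) ds. Then: (i) u is smooth, (θ,T)-periodic and satisfies u'(x) + λ(x) u(x) = f(x) for all x ∈ ℝ; (ii) u(x) = (θ e^{Tλ₀} − 1)^{-1} ∫_0^T e^{∫_x^{x+s} λ(τ) dτ} f(x + s) ds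 for all x ∈ ℝ; (iii) u is the unique (θ,T)-periodic solution: if v : ℝ → ℂ is differentiable, (θ,T)-periodic and satisfies v'(x) + λ(x) v(x) = f(x) for all x, then v = u. -/
open MeasureTheory Real intervalIntegral

noncomputable section

theorem stmt18 (θ : ℂ) (hθ : θ ≠ 0) (T : ℝ) (hT : 0 < T) (lam : ℝ → ℂ)
    (hlam : ContDiff ℝ (⊤ : ℕ∞) lam) (hlamper : ∀ x : ℝ, lam (x + T) = lam x)
    (lam0 : ℂ) (hlam0 : lam0 = (1 / (T : ℂ)) * ∫ x in (0:ℝ)..T, lam x)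
    (hres : θ ≠ Complex.exp (-(T : ℂ) * lam0))
    (f : ℝ → ℂ) (hf : ContDiff ℝ (⊤ : ℕ∞) f) (hper : ThetaPeriodic1 θ T f)
    (u : ℝ → ℂ)
    (hu : ∀ x : ℝ, u x = (1 - θ⁻¹ * Complex.exp (-(T : ℂ) * lam0))⁻¹ *
      ∫ s in (0:ℝ)..T, Complex.exp (-(∫ τ in (x - s)..x, lam τ)) * f (x - s)) :
    ContDiff ℝ (⊤ : ℕ∞) u ∧ ThetaPeriodic1 θ T u ∧
    (∀ x : ℝ, deriv u x + lam x * u x = f x) ∧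
    (∀ x : ℝ, u x = (θ * Complex.exp ((T : ℂ) * lam0) - 1)⁻¹ *
      ∫ s in (0:ℝ)..T, Complex.exp (∫ τ in x..(x + s), lam τ) * f (x + s)) ∧
    (∀ v : ℝ → ℂ, Differentiable ℝ v → ThetaPeriodic1 θ T v →
      (∀ x : ℝ, deriv v x + lam x * v x = f x) → v = u) := by
  have hTc : (T : ℂ) ≠ 0 := by exact_mod_cast hT.ne'
  have hlamc : Continuous lam := hlam.continuous
  have hfc : Continuous f := hf.continuous
  set c : ℂ := 1 - θ⁻¹ * Complex.exp (-(T : ℂ) * lam0) with hcdef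
  set L : ℝ → ℂ := fun x => ∫ τ in (0:ℝ)..x, lam τ with hLdef
  have hLint : ∀ a b : ℝ, IntervalIntegrable lam volume a b :=
    fun a b => hlamc.intervalIntegrable a b
  have hLderiv : ∀ x : ℝ, HasDerivAt L (lam x) x :=
    fun x => (hlamc.integral_hasStrictDerivAt 0 x).hasDerivAt
  have hLdiff : Differentiable ℝ L := fun x => (hLderiv x).differentiableAt
  have hLsmooth : ContDiff ℝ (⊤ : ℕ∞) L := by
    rw [contDiff_infty_iff_deriv]
    exact ⟨hLdiff, (funext fun x => (hLderiv x).deriv) ▸ hlam⟩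
  have hint0T : (∫ τ in (0:ℝ)..T, lam τ) = (T : ℂ) * lam0 := by
    rw [hlam0]; field_simp
  have hLT : ∀ x : ℝ, L (x + T) = L x + (T : ℂ) * lam0 := by
    intro x
    have h2 : (∫ τ in (0:ℝ)..x, lam τ) = ∫ τ in T..(x + T), lam τ := by
      have h := intervalIntegral.integral_comp_add_right (a := (0:ℝ)) (b := x) lam T
      simpa [hlamper] using h
    have h3 := intervalIntegral.integral_add_adjacent_intervals (hLint 0 T) (hLint T (x + T))
    show (∫ τ in (0:ℝ)..(x + T), lam τ) = (∫ τ in (0:ℝ)..x, lam τ) + (T : ℂ) * lam0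
    rw [← h3, hint0T, ← h2]; ring
  set g : ℝ → ℂ := fun y => Complex.exp (L y) * f y with hgdef
  have hgc : Continuous g := (Complex.continuous_exp.comp hLsmooth.continuous).mul hfc
  have hgint : ∀ a b : ℝ, IntervalIntegrable g volume a b :=
    fun a b => hgc.intervalIntegrable a b
  have hgper : ∀ y : ℝ, g (y + T) = θ * Complex.exp ((T : ℂ) * lam0) * g y := by
    intro y
    show Complex.exp (L (y + T)) * f (y + T) = _
    rw [hLT y, hper y, Complex.exp_add]
    show _ = θ * Complex.exp ((T : ℂ) * lam0) * (Complex.exp (L y) * f y)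
    ring
  set F : ℝ → ℂ := fun x => ∫ y in (0:ℝ)..x, g y with hFdef
  have hFderiv : ∀ x : ℝ, HasDerivAt F (g x) x :=
    fun x => (hgc.integral_hasStrictDerivAt 0 x).hasDerivAt
  have hFdiff : Differentiable ℝ F := fun x => (hFderiv x).differentiableAt
  have hgsmooth : ContDiff ℝ (⊤ : ℕ∞) g := (hLsmooth.cexp).mul hf
  have hFsmooth : ContDiff ℝ (⊤ : ℕ∞) F := by
    rw [contDiff_infty_iff_deriv]
    exact ⟨hFdiff, (funext fun x => (hFderiv x).deriv) ▸ hgsmooth⟩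
  set G : ℝ → ℂ := fun x => F x - F (x - T) with hGdef
  have hGderiv : ∀ x : ℝ, HasDerivAt G (g x - g (x - T)) x := by
    intro x
    have h1 : HasDerivAt (fun y : ℝ => F (y - T)) (g (x - T)) x :=
      (hFderiv (x - T)).comp_sub_const x T
    exact (hFderiv x).sub h1
  have hGeq : ∀ x : ℝ, G x = ∫ y in (x - T)..x, g y := by
    intro x
    show (∫ y in (0:ℝ)..x, g y) - (∫ y in (0:ℝ)..(x - T), g y) = _
    exact integral_interval_sub_left (hgint 0 x) (hgint 0 (x - T))
  have hExp : ∀ z : ℂ, Complex.exp z ≠ 0 := Complex.exp_ne_zero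
  have eneg : Complex.exp (-(T : ℂ) * lam0) = (Complex.exp ((T : ℂ) * lam0))⁻¹ := by
    rw [← Complex.exp_neg, neg_mul]
  have hd : θ * Complex.exp ((T : ℂ) * lam0) - 1 ≠ 0 := by
    rw [sub_ne_zero]
    intro h
    apply hres
    rw [eneg]
    exact eq_inv_of_mul_eq_one_right (by linear_combination h)
  have hc : c ≠ 0 := by
    rw [hcdef, sub_ne_zero]
    intro h
    apply hres
    have h2 : θ * 1 = θ * (θ⁻¹ * Complex.exp (-(T : ℂ) * lam0)) := by rw [← h]
    rw [mul_one, ← mul_assoc, mul_inv_cancel₀ hθ, one_mul] at h2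
    exact h2
  -- main representation
  have hrep : ∀ x : ℝ,
      (∫ s in (0:ℝ)..T, Complex.exp (-(∫ τ in (x - s)..x, lam τ)) * f (x - s))
        = Complex.exp (-(L x)) * G x := by
    intro x
    have h1 : ∀ s : ℝ, Complex.exp (-(∫ τ in (x - s)..x, lam τ)) * f (x - s)
        = Complex.exp (-(L x)) * g (x - s) := by
      intro s
      have h : (∫ τ in (x - s)..x, lam τ) = L x - L (x - s) :=
        (integral_interval_sub_left (hLint 0 x) (hLint 0 (x - s))).symm
      rw [h]
      show _ = Complex.exp (-(L x)) * (Complex.exp (L (x - s)) * f (x - s))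
      rw [neg_sub, Complex.exp_sub, Complex.exp_neg, div_eq_mul_inv]
      ring
    calc (∫ s in (0:ℝ)..T, Complex.exp (-(∫ τ in (x - s)..x, lam τ)) * f (x - s))
        = ∫ s in (0:ℝ)..T, Complex.exp (-(L x)) * g (x - s) := by simp_rw [h1]
      _ = Complex.exp (-(L x)) * ∫ s in (0:ℝ)..T, g (x - s) :=
          intervalIntegral.integral_const_mul _ _
      _ = Complex.exp (-(L x)) * ∫ y in (x - T)..x, g y := by
          rw [intervalIntegral.integral_comp_sub_left g x]
          norm_num
      _ = Complex.exp (-(L x)) * G x := by rw [hGeq]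
  have hu2 : ∀ x : ℝ, u x = c⁻¹ * (Complex.exp (-(L x)) * G x) := by
    intro x; rw [hu x, hrep x]
  have hgsub : ∀ x : ℝ, g x - g (x - T) = c * g x := by
    intro x
    have h := hgper (x - T)
    rw [sub_add_cancel] at h
    have h2 : g (x - T) = θ⁻¹ * Complex.exp (-(T : ℂ) * lam0) * g x := by
      rw [h, eneg]
      field_simp
    rw [h2, hcdef]
    ring
  -- derivative of u
  have hu' : ∀ x : ℝ, HasDerivAt u (f x - lam x * u x) x := by
    intro x
    have hE : HasDerivAt (fun y => Complex.exp (-(L y))) (Complex.exp (-(L x)) * (-(lam x))) x :=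
      ((hLderiv x).neg).cexp
    have hG' : HasDerivAt G (c * g x) x := hgsub x ▸ hGderiv x
    have hmain := (hE.mul hG').const_mul c⁻¹
    have hmain' : HasDerivAt (fun y => c⁻¹ * (Complex.exp (-(L y)) * G y)) (f x - lam x * u x) x := by
      refine hmain.congr_deriv ?_
      symm
      rw [hu2 x]
      have hgx : g x = Complex.exp (L x) * f x := rfl
      rw [hgx]
      have h1 : c⁻¹ * c = 1 := inv_mul_cancel₀ hc
      have hEL : Complex.exp (-(L x)) * Complex.exp (L x) = 1 := by
        rw [← Complex.exp_add]; simp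
      linear_combination (-(f x) * Complex.exp (L x) * Complex.exp (-(L x))) * h1 +
        (-(f x)) * hEL
    exact hmain'.congr_of_eventuallyEq (Filter.Eventually.of_forall hu2)
  have hode : ∀ x : ℝ, deriv u x + lam x * u x = f x := by
    intro x
    rw [(hu' x).deriv]; ring
  -- smoothness
  have husmooth : ContDiff ℝ (⊤ : ℕ∞) u := by
    rw [funext hu2]
    exact contDiff_const.mul ((hLsmooth.neg.cexp).mul
      (hFsmooth.sub (hFsmooth.comp (contDiff_id.sub contDiff_const))))
  -- periodicity of G and u
  have hGper : ∀ x : ℝ, G (x + T) = θ * Complex.exp ((T : ℂ) * lam0) * G x := by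
    intro x
    have h1 : G (x + T) = ∫ y in x..(x + T), g y := by
      show F (x + T) - F (x + T - T) = _
      rw [add_sub_cancel_right]
      exact integral_interval_sub_left (hgint 0 (x + T)) (hgint 0 x)
    have h2 : (∫ y in x..(x + T), g y) = ∫ y in (x - T)..x, g (y + T) := by
      have h := intervalIntegral.integral_comp_add_right (a := x - T) (b := x) g T
      rw [sub_add_cancel] at h
      exact h.symm
    have h3 : (∫ y in (x - T)..x, g (y + T))
        = θ * Complex.exp ((T : ℂ) * lam0) * ∫ y in (x - T)..x, g y := by
      simp_rw [hgper]
      exact intervalIntegral.integral_const_mul _ _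
    rw [h1, h2, h3, ← hGeq]
  have huper : ThetaPeriodic1 θ T u := by
    intro x
    rw [hu2 (x + T), hu2 x, hLT x, hGper x]
    have e1 : Complex.exp (-(L x + (T : ℂ) * lam0))
        = Complex.exp (-(L x)) * Complex.exp (-(T : ℂ) * lam0) := by
      rw [← Complex.exp_add, neg_mul, neg_add]
    have e2 : Complex.exp (-(T : ℂ) * lam0) * Complex.exp ((T : ℂ) * lam0) = 1 := by
      rw [← Complex.exp_add, neg_mul, neg_add_cancel, Complex.exp_zero]
    rw [e1]
    linear_combination (c⁻¹ * Complex.exp (-(L x)) * θ * G x) * e2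
  -- formula (ii)
  have hii : ∀ x : ℝ, u x = (θ * Complex.exp ((T : ℂ) * lam0) - 1)⁻¹ *
      ∫ s in (0:ℝ)..T, Complex.exp (∫ τ in x..(x + s), lam τ) * f (x + s) := by
    intro x
    have h1 : ∀ s : ℝ, Complex.exp (∫ τ in x..(x + s), lam τ) * f (x + s)
        = Complex.exp (-(L x)) * g (x + s) := by
      intro s
      have h : (∫ τ in x..(x + s), lam τ) = L (x + s) - L x :=
        (integral_interval_sub_left (hLint 0 (x + s)) (hLint 0 x)).symm
      rw [h]
      show _ = Complex.exp (-(L x)) * (Complex.exp (L (x + s)) * f (x + s))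
      rw [Complex.exp_sub, Complex.exp_neg, div_eq_mul_inv]
      ring
    have h2 : (∫ s in (0:ℝ)..T, Complex.exp (∫ τ in x..(x + s), lam τ) * f (x + s))
        = Complex.exp (-(L x)) * (θ * Complex.exp ((T : ℂ) * lam0) * G x) := by
      calc (∫ s in (0:ℝ)..T, Complex.exp (∫ τ in x..(x + s), lam τ) * f (x + s))
          = ∫ s in (0:ℝ)..T, Complex.exp (-(L x)) * g (x + s) := by simp_rw [h1]
        _ = Complex.exp (-(L x)) * ∫ s in (0:ℝ)..T, g (x + s) :=
            intervalIntegral.integral_const_mul _ _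
        _ = Complex.exp (-(L x)) * ∫ y in x..(x + T), g y := by
            rw [intervalIntegral.integral_comp_add_left g x]
            norm_num
        _ = Complex.exp (-(L x)) * (θ * Complex.exp ((T : ℂ) * lam0) * G x) := by
            have h1' : (∫ y in x..(x + T), g y) = G (x + T) := by
              show _ = F (x + T) - F (x + T - T)
              rw [add_sub_cancel_right]
              exact (integral_interval_sub_left (hgint 0 (x + T)) (hgint 0 x)).symm
            rw [h1', hGper x]
    have hkey : c * (θ * Complex.exp ((T : ℂ) * lam0)) = θ * Complex.exp ((T : ℂ) * lam0) - 1 := by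
      rw [hcdef, eneg]
      field_simp
    rw [h2, hu2 x, ← hkey, mul_inv]
    have hθE : (θ * Complex.exp ((T : ℂ) * lam0)) ≠ 0 := mul_ne_zero hθ (hExp _)
    field_simp
  refine ⟨husmooth, huper, hode, hii, ?_⟩
  -- uniqueness
  intro v hv hvper hveq
  set w : ℝ → ℂ := fun x => v x - u x with hwdef
  have hwderiv : ∀ x : ℝ, HasDerivAt w (-(lam x) * w x) x := by
    intro x
    have h1 : HasDerivAt v (deriv v x) x := (hv x).hasDerivAt
    have h2 := h1.sub (hu' x)
    refine h2.congr_deriv ?_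
    symm
    have h3 : deriv v x = f x - lam x * v x := by linear_combination hveq x
    rw [h3]
    show -(lam x) * (v x - u x) = _
    ring
  have hE2 : ∀ x : ℝ, HasDerivAt (fun y => Complex.exp (L y) * w y) 0 x := by
    intro x
    have h := ((hLderiv x).cexp).mul (hwderiv x)
    refine h.congr_deriv ?_
    ring
  have hconst : ∀ x : ℝ, Complex.exp (L x) * w x = w 0 := by
    intro x
    have h := is_const_of_deriv_eq_zero (f := fun y => Complex.exp (L y) * w y)
      (fun y => (hE2 y).differentiableAt) (fun y => (hE2 y).deriv) x 0
    have hL0 : L 0 = 0 := intervalIntegral.integral_same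
    rw [hL0, Complex.exp_zero, one_mul] at h
    exact h
  have hwT : w T = θ * w 0 := by
    show v T - u T = θ * (v 0 - u 0)
    have h1 : v T = θ * v 0 := by simpa using hvper 0
    have h2 : u T = θ * u 0 := by simpa using huper 0
    rw [h1, h2]; ring
  have hw0 : w 0 = 0 := by
    have hLTval : L T = (T : ℂ) * lam0 := by
      have h := hLT 0
      have hL0 : L 0 = 0 := intervalIntegral.integral_same
      rw [hL0, zero_add] at h
      simpa using h
    have h := hconst T
    rw [hLTval, hwT] at h
    have h2 : (θ * Complex.exp ((T : ℂ) * lam0) - 1) * w 0 = 0 := by linear_combination h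
    rcases mul_eq_zero.mp h2 with h3 | h3
    · exact absurd h3 hd
    · exact h3
  funext x
  have h := hconst x
  rw [hw0] at h
  have h2 : w x = 0 := (mul_eq_zero.mp h).resolve_left (hExp _)
  exact sub_eq_zero.mp h2
end
end

section
/- Let θ ∈ ℂ\{0}, T > 0, let λ : ℝ → ℂ be smooth and T-periodic, set λ₀ := (1/T) ∫_0^T λ(x) dx, and assume θ = e^{-Tλ₀}. Let f : ℝ → ℂ be smooth and (θ,T)-periodic. For c ∈ ℂ define u_c(x) := c e^{-∫_0^x λ(s) ds} + ∫_0^x e^{-∫_s^x λ(τ) dτ} f(s) ds. Then: (i) each u_c is smooth and satisfies u_c'(x) + λ(x) u_c(x) = f(x) for all x ∈ ℝ; (ii) u_c is (θ,T)-periodic (for one, equivalently for every, c ∈ ℂ) if and only if ∫_0^T e^{∫_0^s λ(τ) dτ} f(s) ds = 0; (iii) if ∫_0^T e^{∫_0^s λ(τ) dτ} f(s) ds = 0, then every differentiable (θ,T)-periodic solution v of v'(x) + λ(x) v(x) = f(x) equals u_c for some c ∈ ℂ. -/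
open MeasureTheory Real intervalIntegral

noncomputable section

theorem stmt19 (θ : ℂ) (hθ : θ ≠ 0) (T : ℝ) (hT : 0 < T) (lam : ℝ → ℂ)
    (hlam : ContDiff ℝ (⊤ : ℕ∞) lam) (hlamper : ∀ x : ℝ, lam (x + T) = lam x)
    (lam0 : ℂ) (hlam0 : lam0 = (1 / (T : ℂ)) * ∫ x in (0:ℝ)..T, lam x)
    (hres : θ = Complex.exp (-(T : ℂ) * lam0))
    (f : ℝ → ℂ) (hf : ContDiff ℝ (⊤ : ℕ∞) f) (hper : ThetaPeriodic1 θ T f)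
    (U : ℂ → ℝ → ℂ)
    (hU : ∀ (c : ℂ) (x : ℝ), U c x = c * Complex.exp (-(∫ s in (0:ℝ)..x, lam s)) +
      ∫ s in (0:ℝ)..x, Complex.exp (-(∫ τ in s..x, lam τ)) * f s) :
    (∀ c : ℂ, ContDiff ℝ (⊤ : ℕ∞) (U c) ∧
      ∀ x : ℝ, deriv (U c) x + lam x * U c x = f x) ∧
    ((∃ c : ℂ, ThetaPeriodic1 θ T (U c)) ↔
      (∫ s in (0:ℝ)..T, Complex.exp (∫ τ in (0:ℝ)..s, lam τ) * f s) = 0) ∧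
    ((∀ c : ℂ, ThetaPeriodic1 θ T (U c)) ↔
      (∫ s in (0:ℝ)..T, Complex.exp (∫ τ in (0:ℝ)..s, lam τ) * f s) = 0) ∧
    ((∫ s in (0:ℝ)..T, Complex.exp (∫ τ in (0:ℝ)..s, lam τ) * f s) = 0 →
      ∀ v : ℝ → ℂ, Differentiable ℝ v → ThetaPeriodic1 θ T v →
        (∀ x : ℝ, deriv v x + lam x * v x = f x) → ∃ c : ℂ, v = U c) := by
  have hlamc : Continuous lam := hlam.continuous
  have hfc : Continuous f := hf.continuous
  set Λ : ℝ → ℂ := fun x => ∫ s in (0:ℝ)..x, lam s with hΛdef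
  have hΛ' : ∀ x, HasDerivAt Λ (lam x) x := fun x =>
    intervalIntegral.integral_hasDerivAt_right (hlamc.intervalIntegrable _ _)
      (hlamc.stronglyMeasurableAtFilter _ _) hlamc.continuousAt
  have hΛdiff : Differentiable ℝ Λ := fun x => (hΛ' x).differentiableAt
  have hΛcont : Continuous Λ := hΛdiff.continuous
  have hEcont : Continuous fun s => Complex.exp (Λ s) * f s :=
    (Complex.continuous_exp.comp hΛcont).mul hfc
  set F : ℝ → ℂ := fun x => ∫ s in (0:ℝ)..x, Complex.exp (Λ s) * f s with hFdef
  have hF' : ∀ x, HasDerivAt F (Complex.exp (Λ x) * f x) x := fun x =>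
    intervalIntegral.integral_hasDerivAt_right (hEcont.intervalIntegrable _ _)
      (hEcont.stronglyMeasurableAtFilter _ _) hEcont.continuousAt
  -- the condition integral is `F T`
  have hcond : (∫ s in (0:ℝ)..T, Complex.exp (∫ τ in (0:ℝ)..s, lam τ) * f s) = F T := rfl
  -- alternative formula for U
  have hUalt : ∀ (c : ℂ) (x : ℝ), U c x = Complex.exp (-Λ x) * (c + F x) := by
    intro c x
    rw [hU]
    have key : ∀ s ∈ Set.uIcc (0:ℝ) x, Complex.exp (-(∫ τ in s..x, lam τ)) * f s
        = Complex.exp (-Λ x) * (Complex.exp (Λ s) * f s) := by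
      intro s _
      have hsub : (∫ τ in s..x, lam τ) = Λ x - Λ s :=
        (intervalIntegral.integral_interval_sub_left (hlamc.intervalIntegrable _ _)
          (hlamc.intervalIntegrable _ _)).symm
      rw [hsub, neg_sub, Complex.exp_sub, Complex.exp_neg]
      field_simp
    rw [intervalIntegral.integral_congr key, intervalIntegral.integral_const_mul]
    ring
  -- smoothness
  have hΛcd : ContDiff ℝ (⊤ : ℕ∞) Λ := by
    rw [contDiff_infty_iff_deriv]
    refine ⟨fun x => (hΛ' x).differentiableAt, ?_⟩
    have : deriv Λ = lam := funext fun x => (hΛ' x).deriv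
    rw [this]; exact hlam
  have hFcd : ContDiff ℝ (⊤ : ℕ∞) F := by
    rw [contDiff_infty_iff_deriv]
    refine ⟨fun x => (hF' x).differentiableAt, ?_⟩
    have : deriv F = fun x => Complex.exp (Λ x) * f x := funext fun x => (hF' x).deriv
    rw [this]
    exact hΛcd.cexp.mul hf
  -- part (i)
  have part1 : ∀ c : ℂ, ContDiff ℝ (⊤ : ℕ∞) (U c) ∧
      ∀ x : ℝ, deriv (U c) x + lam x * U c x = f x := by
    intro c
    have hEq : U c = fun x => Complex.exp (-Λ x) * (c + F x) := funext (hUalt c)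
    constructor
    · rw [hEq]
      exact hΛcd.neg.cexp.mul (contDiff_const.add hFcd)
    · intro x
      have hd : HasDerivAt (U c)
          (Complex.exp (-Λ x) * (-(lam x)) * (c + F x)
            + Complex.exp (-Λ x) * (Complex.exp (Λ x) * f x)) x := by
        rw [hEq]
        exact ((hΛ' x).neg.cexp).mul ((hF' x).const_add c)
      rw [hd.deriv, hUalt c x]
      have h1 : Complex.exp (-Λ x) * Complex.exp (Λ x) = 1 := by
        rw [← Complex.exp_add, neg_add_cancel, Complex.exp_zero]
      linear_combination f x * h1
  -- periodicity of Λ and F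
  have hTne : (T : ℂ) ≠ 0 := by exact_mod_cast hT.ne'
  have hΛT : Λ T = (T : ℂ) * lam0 := by
    rw [hlam0]; field_simp; rfl
  have hΛper : ∀ x : ℝ, Λ (x + T) = Λ x + (T : ℂ) * lam0 := by
    intro x
    have h1 : (∫ s in T..(x + T), lam s) = Λ x := by
      have h2 := intervalIntegral.integral_comp_add_right (a := (0:ℝ)) (b := x) (f := lam) T
      simp only [hlamper, zero_add] at h2
      exact h2.symm
    have h3 : Λ (x + T) = Λ T + ∫ s in T..(x + T), lam s := by
      rw [hΛdef]
      exact (intervalIntegral.integral_add_adjacent_intervals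
        (hlamc.intervalIntegrable _ _) (hlamc.intervalIntegrable _ _)).symm
    rw [h3, h1, hΛT]; ring
  have hθ1 : Complex.exp ((T : ℂ) * lam0) * θ = 1 := by
    rw [hres, ← Complex.exp_add, neg_mul, add_neg_cancel, Complex.exp_zero]
  have hFper : ∀ x : ℝ, F (x + T) = F T + F x := by
    intro x
    have h1 : (∫ s in T..(x + T), Complex.exp (Λ s) * f s) = F x := by
      have h2 := intervalIntegral.integral_comp_add_right (a := (0:ℝ)) (b := x)
        (f := fun s => Complex.exp (Λ s) * f s) T
      simp only [zero_add] at h2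
      rw [← h2, hFdef]
      apply intervalIntegral.integral_congr
      intro s _
      have hps : f (s + T) = θ * f s := hper s
      show Complex.exp (Λ (s + T)) * f (s + T) = Complex.exp (Λ s) * f s
      rw [hΛper s, hps, Complex.exp_add]
      linear_combination Complex.exp (Λ s) * f s * hθ1
    have h3 : F (x + T) = F T + ∫ s in T..(x + T), Complex.exp (Λ s) * f s := by
      rw [hFdef]
      exact (intervalIntegral.integral_add_adjacent_intervals
        (hEcont.intervalIntegrable _ _) (hEcont.intervalIntegrable _ _)).symm
    rw [h3, h1]
  have hexpshift : ∀ x : ℝ, Complex.exp (-Λ (x + T)) = θ * Complex.exp (-Λ x) := by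
    intro x
    rw [hΛper x, neg_add, Complex.exp_add, hres, neg_mul]
    ring
  have hUper : ∀ (c : ℂ) (x : ℝ),
      U c (x + T) = θ * U c x + θ * Complex.exp (-Λ x) * F T := by
    intro c x
    rw [hUalt, hUalt, hexpshift, hFper]
    ring
  -- the two iffs
  have hback : F T = 0 → ∀ c : ℂ, ThetaPeriodic1 θ T (U c) := by
    intro h0 c x
    rw [hUper c x, h0]
    ring
  have hfwd : (∃ c : ℂ, ThetaPeriodic1 θ T (U c)) → F T = 0 := by
    rintro ⟨c, hc⟩
    have h1 := hc 0
    rw [hUper c 0] at h1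
    have h2 : θ * Complex.exp (-Λ 0) * F T = 0 := by linear_combination h1
    have h3 : θ * Complex.exp (-Λ 0) ≠ 0 := mul_ne_zero hθ (Complex.exp_ne_zero _)
    exact (mul_eq_zero.mp h2).resolve_left h3
  refine ⟨part1, ?_, ?_, ?_⟩
  · rw [hcond]
    exact ⟨hfwd, fun h0 => ⟨0, hback h0 0⟩⟩
  · rw [hcond]
    exact ⟨fun h => hfwd ⟨0, h 0⟩, hback⟩
  · rw [hcond]
    intro h0 v hv hvper hode
    refine ⟨v 0, funext fun x => ?_⟩
    set g : ℝ → ℂ := fun x => Complex.exp (Λ x) * v x - F x with hgdef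
    have hg' : ∀ x, HasDerivAt g 0 x := by
      intro x
      have h1 : HasDerivAt (fun x => Complex.exp (Λ x) * v x)
          (Complex.exp (Λ x) * lam x * v x + Complex.exp (Λ x) * deriv v x) x :=
        ((hΛ' x).cexp).mul (hv x).hasDerivAt
      have h2 := h1.sub (hF' x)
      refine h2.congr_deriv (Eq.symm ?_)
      linear_combination -Complex.exp (Λ x) * hode x
    have hgc : g x = g 0 :=
      is_const_of_deriv_eq_zero (fun x => (hg' x).differentiableAt)
        (fun x => (hg' x).deriv) x 0
    have hg0 : g 0 = v 0 := by
      simp [hgdef, hΛdef, hFdef]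
    rw [hg0] at hgc
    rw [hUalt (v 0) x, Complex.exp_neg]
    have hne : Complex.exp (Λ x) ≠ 0 := Complex.exp_ne_zero _
    field_simp
    linear_combination hgc
end
end
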